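/- arXiv:2504.09492 — 10 statements merged into one kernel-verified Lean document; each statement's English description precedes it below -/
import Mathlib

section
/- For every dimension d ≥ 1, every shape parameter ε > 0, every n ≥ 1, every family of pairwise distinct points x_1, …, x_n ∈ ℝ^d, and every nonzero vector c ∈ ℝ^n, one has Σ_{i,j} c_i c_j · exp(−ε² ‖x_i − x_j‖²) > 0; that is, the Gaussian kernel Φ(x) = exp(−ε²‖x‖²) is strictly positive definite on ℝ^d, and in particular the Gaussian interpolation matrix A with A_{ij} = exp(−ε²‖x_i − x_j‖²) is positive definite. -/
/-!
Writing `‖xᵢ - xⱼ‖² = ‖xᵢ‖² - 2⟪xᵢ, xⱼ⟫ + ‖xⱼ‖²`, the Gaussian matrix is a congruence, by a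
positive diagonal matrix, of `K = (exp (2ε²⟪xᵢ, xⱼ⟫))ᵢⱼ`. Expanding the exponential,
`K = ∑ₖ (2ε²)ᵏ / k! • G^{∘k}` where `G` is the Gram matrix of the points, and each Hadamard power
`G^{∘k}` is positive semidefinite by the Schur product theorem. If `bᵀ K b = 0`, then
`G^{∘k} b = 0` for every `k`, so all moments `∑ⱼ ⟪xᵢ, xⱼ⟫ᵏ bⱼ` vanish, and by Lagrange
interpolation so does `∑ bⱼ` over the `j` with `⟪xᵢ, xⱼ⟫ = a`, for every value `a`. For `i` of
maximal norm in the support of `b`, the point `xᵢ` is the only one of the support with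
`⟪xᵢ, xⱼ⟫ = ‖xᵢ‖²`, hence `bᵢ = 0`: a contradiction.
-/

open Finset Matrix Polynomial Real
open scoped Nat RealInnerProductSpace ComplexOrder

section Moments

variable {ι R : Type*} [Fintype ι]

theorem Polynomial.sum_eval_mul_eq_zero_of_forall_sum_pow_mul_eq_zero [CommSemiring R]
    {t b : ι → R} (h : ∀ k : ℕ, ∑ j, t j ^ k * b j = 0) (p : R[X]) :
    ∑ j, p.eval (t j) * b j = 0 := by
  simp_rw [eval_eq_sum_range, sum_mul]
  rw [sum_comm]
  exact sum_eq_zero fun k _ => by simp_rw [mul_assoc, ← mul_sum, h k, mul_zero]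

theorem sum_filter_eq_zero_of_forall_sum_pow_mul_eq_zero [CommRing R] [IsDomain R]
    [DecidableEq R] {t b : ι → R} (h : ∀ k : ℕ, ∑ j, t j ^ k * b j = 0) (a : R) :
    ∑ j with t j = a, b j = 0 := by
  set p : R[X] := ∏ s ∈ (univ.image t).erase a, (X - C s)
  have hpa : p.eval a ≠ 0 := by
    simp only [p, eval_prod, eval_sub, eval_X, eval_C]
    exact prod_ne_zero_iff.2 fun s hs => sub_ne_zero.2 (ne_of_mem_erase hs).symm
  have hpt : ∀ j, t j ≠ a → p.eval (t j) = 0 := fun j hj => by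
    simp only [p, eval_prod, eval_sub, eval_X, eval_C]
    exact prod_eq_zero (mem_erase.2 ⟨hj, mem_image_of_mem t (mem_univ j)⟩) (sub_self _)
  have hsum : p.eval a * ∑ j with t j = a, b j = ∑ j, p.eval (t j) * b j := by
    rw [mul_sum, sum_filter]
    refine sum_congr rfl fun j _ => ?_
    split_ifs with hj
    · rw [hj]
    · rw [hpt j hj, zero_mul]
  rw [sum_eval_mul_eq_zero_of_forall_sum_pow_mul_eq_zero h p] at hsum
  exact (mul_eq_zero.1 hsum).resolve_left hpa

end Moments

theorem Matrix.PosSemidef.map_pow {ι 𝕜 : Type*} [Finite ι] [RCLike 𝕜] {A : Matrix ι ι 𝕜}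
    (hA : A.PosSemidef) (k : ℕ) : (A.map (· ^ k)).PosSemidef := by
  induction k with
  | zero =>
    convert posSemidef_vecMulVec_self_star (fun _ : ι => (1 : 𝕜)) using 1
    ext i j
    simp [vecMulVec]
  | succ k ih =>
    convert ih.hadamard hA using 1
    ext i j
    simp [pow_succ]

theorem real_inner_lt_norm_sq_of_norm_le_of_ne {E : Type*} [NormedAddCommGroup E]
    [InnerProductSpace ℝ E] {u v : E} (hvu : ‖v‖ ≤ ‖u‖) (hne : v ≠ u) :
    ⟪u, v⟫ < ‖u‖ ^ 2 := by
  have hdist : 0 < ‖u - v‖ := norm_pos_iff.2 (sub_ne_zero.2 hne.symm)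
  nlinarith [norm_sub_sq_real u v, norm_nonneg v]

section Gram

variable {ι E : Type*} [Fintype ι] [NormedAddCommGroup E] [InnerProductSpace ℝ E]
  {x : ι → E}

theorem exists_pos_dotProduct_gram_map_pow_mulVec (hx : Function.Injective x) {b : ι → ℝ}
    (hb : b ≠ 0) : ∃ k : ℕ, 0 < b ⬝ᵥ (gram ℝ x).map (· ^ k) *ᵥ b := by
  by_contra! h
  have hker (k : ℕ) : (gram ℝ x).map (· ^ k) *ᵥ b = 0 := by
    have hpsd := (posSemidef_gram ℝ x).map_pow k
    refine (hpsd.dotProduct_mulVec_zero_iff b).1 (le_antisymm ?_ ?_)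
    · simpa using h k
    · exact hpsd.dotProduct_mulVec_nonneg b
  obtain ⟨i, hi, hmax⟩ := (univ.filter (b · ≠ 0)).exists_max_image (‖x ·‖)
    (by simpa [Finset.Nonempty, funext_iff] using hb)
  have hmoments := sum_filter_eq_zero_of_forall_sum_pow_mul_eq_zero (t := fun j => ⟪x i, x j⟫)
    (b := b) (fun k => by simpa [mulVec, dotProduct] using congrFun (hker k) i) (‖x i‖ ^ 2)
  rw [sum_eq_single i] at hmoments
  · exact (mem_filter.1 hi).2 hmoments
  · intro j hj hji
    by_contra hbj
    exact (real_inner_lt_norm_sq_of_norm_le_of_ne (hmax j (by simpa using hbj))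
      (hx.ne hji)).ne (mem_filter.1 hj).2
  · exact fun hi' => (hi' (mem_filter.2 ⟨mem_univ i, real_inner_self_eq_norm_sq (x i)⟩)).elim

theorem posDef_exp_mul_inner (hx : Function.Injective x) {c : ℝ} (hc : 0 < c) :
    (of fun i j => exp (c * ⟪x i, x j⟫)).PosDef := by
  refine PosDef.of_dotProduct_mulVec_pos ?_ fun b hb => ?_
  · ext i j
    simp [real_inner_comm]
  have hsum : HasSum (fun k : ℕ => c ^ k / k ! * (b ⬝ᵥ (gram ℝ x).map (· ^ k) *ᵥ b))
      (star b ⬝ᵥ (of fun i j => exp (c * ⟪x i, x j⟫)) *ᵥ b) := by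
    simp only [star_trivial, dotProduct, mulVec, of_apply, map_apply, gram_apply, mul_sum]
    refine hasSum_sum fun i _ => hasSum_sum fun j _ => ?_
    have hexp :=
      ((NormedSpace.expSeries_div_hasSum_exp (c * ⟪x i, x j⟫)).mul_right (b j)).mul_left (b i)
    rw [← exp_eq_exp_ℝ] at hexp
    exact hexp.congr_fun fun k => by rw [mul_pow]; ring
  have hterm (k : ℕ) : 0 ≤ c ^ k / k ! * (b ⬝ᵥ (gram ℝ x).map (· ^ k) *ᵥ b) :=
    mul_nonneg (by positivity)
      (by simpa using ((posSemidef_gram ℝ x).map_pow k).dotProduct_mulVec_nonneg b)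
  obtain ⟨k, hk⟩ := exists_pos_dotProduct_gram_map_pow_mulVec hx hb
  exact (mul_pos (by positivity) hk).trans_le (le_hasSum hsum k fun j _ => hterm j)

theorem posDef_gaussian_kernel (hx : Function.Injective x) {ε : ℝ} (hε : ε ≠ 0) :
    (of fun i j => exp (-(ε ^ 2 * ‖x i - x j‖ ^ 2))).PosDef := by
  classical
  set D : Matrix ι ι ℝ := diagonal fun i => exp (-(ε ^ 2 * ‖x i‖ ^ 2))
  have hD : IsUnit D := isUnit_diagonal.2 (Pi.isUnit_iff.2 fun i => (exp_pos _).ne'.isUnit)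
  have hfactor : (of fun i j => exp (-(ε ^ 2 * ‖x i - x j‖ ^ 2)))
      = star D * (of fun i j => exp (2 * ε ^ 2 * ⟪x i, x j⟫)) * D := by
    ext i j
    simp only [D, star_eq_conjTranspose, diagonal_conjTranspose, star_trivial, diagonal_mul,
      mul_diagonal, of_apply, ← exp_add, norm_sub_sq_real]
    ring_nf
  rw [hfactor, IsUnit.posDef_star_left_conjugate_iff hD]
  exact posDef_exp_mul_inner hx (by positivity)

end Gram

theorem gaussian_strictly_pos_def_general (d : ℕ) (ε : ℝ) (hε : 0 < ε)
    (n : ℕ) (x : Fin n → EuclideanSpace ℝ (Fin d))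
    (hx : Function.Injective x) (c : Fin n → ℝ) (hc : c ≠ 0) :
    0 < ∑ i, ∑ j, c i * c j * Real.exp (-(ε ^ 2 * ‖x i - x j‖ ^ 2)) ∧
    (Matrix.of fun i j => Real.exp (-(ε ^ 2 * ‖x i - x j‖ ^ 2))).PosDef := by
  have hA := posDef_gaussian_kernel hx hε.ne'
  refine ⟨?_, hA⟩
  calc (0 : ℝ) < star c ⬝ᵥ (of fun i j => exp (-(ε ^ 2 * ‖x i - x j‖ ^ 2))) *ᵥ c :=
        hA.dotProduct_mulVec_pos hc
    _ = _ := by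
      simp only [star_trivial, dotProduct, mulVec, of_apply, mul_sum]
      exact sum_congr rfl fun i _ => sum_congr rfl fun j _ => by ring

/-- The Gaussian kernel `Φ(x) = exp(−ε²‖x‖²)` is strictly positive definite on `ℝ^d`:
for pairwise distinct points `x_1, …, x_n` and every nonzero `c ∈ ℝ^n`, the quadratic
form `Σ_{i,j} c_i c_j exp(−ε²‖x_i − x_j‖²)` is positive; in particular the Gaussian
interpolation matrix `A_{ij} = exp(−ε²‖x_i − x_j‖²)` is positive definite. -/
theorem gaussian_strictly_pos_def (d : ℕ) (hd : 1 ≤ d) (ε : ℝ) (hε : 0 < ε)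
    (n : ℕ) (hn : 1 ≤ n) (x : Fin n → EuclideanSpace ℝ (Fin d))
    (hx : Function.Injective x) (c : Fin n → ℝ) (hc : c ≠ 0) :
    0 < ∑ i, ∑ j, c i * c j * Real.exp (-(ε ^ 2 * ‖x i - x j‖ ^ 2)) ∧
    (Matrix.of fun i j => Real.exp (-(ε ^ 2 * ‖x i - x j‖ ^ 2))).PosDef :=
  gaussian_strictly_pos_def_general d ε hε n x hx c hc
end

section
/- For every dimension d ≥ 1, every shape parameter ε > 0, every n ≥ 1, every family of pairwise distinct points x_1, …, x_n ∈ ℝ^d, and every nonzero vector c ∈ ℝ^n, one has Σ_{i,j} c_i c_j · (1 + ε²‖x_i − x_j‖²)^{−1/2} > 0; that is, the inverse multiquadric kernel is strictly positive definite on ℝ^d, and in particular the interpolation matrix A with A_{ij} = (1 + ε²‖x_i − x_j‖²)^{−1/2} is positive definite. -/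
/-!
Subordination to Gaussians: `1 / √(1 + r²) = π^(-1/2) ∫₀^∞ t^(-1/2) e^(-t) e^(-t r²) dt`, so the
inverse multiquadric quadratic form is a positively weighted integral of the Gaussian quadratic
forms `G(t) = ∑ᵢⱼ cᵢ cⱼ exp (-t ‖xᵢ - xⱼ‖²)`. Each `G(t)` is nonnegative: after a diagonal
congruence the Gaussian matrix becomes `exp (2t ⟪xᵢ, xⱼ⟫)`, a series with nonnegative
coefficients in the Hadamard powers of the Gram matrix (Schur product theorem). For distinct
points the off-diagonal terms of `G(t)` vanish as `t → ∞`, so `G(t) → ∑ᵢ cᵢ² > 0` and the integral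
is strictly positive.
-/

open Real Set Filter Topology MeasureTheory Matrix
open scoped RealInnerProductSpace

namespace Matrix

variable {ι : Type*} [Fintype ι]

lemma star_dotProduct_mulVec_eq_sum_sum (M : Matrix ι ι ℝ) (c : ι → ℝ) :
    star c ⬝ᵥ (M *ᵥ c) = ∑ i, ∑ j, c i * c j * M i j := by
  simp only [dotProduct, mulVec, star_trivial, Finset.mul_sum]
  exact Finset.sum_congr rfl fun i _ => Finset.sum_congr rfl fun j _ => by ring

lemma PosSemidef.of_hasSum {M : ℕ → Matrix ι ι ℝ} {A : Matrix ι ι ℝ} (hA : HasSum M A)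
    (hM : ∀ k, (M k).PosSemidef) : A.PosSemidef := by
  refine .of_dotProduct_mulVec_nonneg ?_ fun c => ?_
  · have hAt : HasSum M Aᵀ := by
      convert hA.matrix_transpose using 2 with k
      rw [← conjTranspose_eq_transpose_of_trivial, (hM k).isHermitian]
    exact hAt.unique hA
  · let q : Matrix ι ι ℝ →+ ℝ :=
      { toFun := fun B => star c ⬝ᵥ (B *ᵥ c)
        map_zero' := by simp
        map_add' := fun B C => by simp [add_mulVec, dotProduct_add] }
    have hq : Continuous q :=
      continuous_const.dotProduct (continuous_id.matrix_mulVec continuous_const)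
    exact (hA.map q hq).nonneg fun k => (hM k).dotProduct_mulVec_nonneg c

variable {E : Type*} [NormedAddCommGroup E] [InnerProductSpace ℝ E]

lemma posSemidef_inner_pow (v : ι → E) (k : ℕ) :
    (of fun i j => ⟪v i, v j⟫ ^ k).PosSemidef := by
  induction k with
  | zero => simpa [vecMulVec] using posSemidef_vecMulVec_self_star (1 : ι → ℝ)
  | succ k ih =>
    have hsucc :
        (of fun i j => ⟪v i, v j⟫ ^ (k + 1)) = gram ℝ v ⊙ of fun i j => ⟪v i, v j⟫ ^ k := by
      ext i j
      simp [gram_apply, pow_succ']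
    exact hsucc ▸ (posSemidef_gram ℝ v).hadamard ih

lemma posSemidef_exp_mul_inner {a : ℝ} (ha : 0 ≤ a) (v : ι → E) :
    (of fun i j => exp (a * ⟪v i, v j⟫)).PosSemidef := by
  refine .of_hasSum (M := fun k => (a ^ k / k.factorial) • of fun i j => ⟪v i, v j⟫ ^ k)
    (Pi.hasSum.2 fun i => Pi.hasSum.2 fun j => ?_)
    fun k => (posSemidef_inner_pow v k).smul (by positivity)
  simpa [exp_eq_exp_ℝ, mul_pow, div_mul_eq_mul_div] using
    NormedSpace.expSeries_div_hasSum_exp (a * ⟪v i, v j⟫)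

lemma posSemidef_exp_neg_mul_norm_sub_sq {a : ℝ} (ha : 0 ≤ a) (v : ι → E) :
    (of fun i j => exp (-(a * ‖v i - v j‖ ^ 2))).PosSemidef := by
  classical
  let D : Matrix ι ι ℝ := diagonal fun i => exp (-(a * ‖v i‖ ^ 2))
  convert (posSemidef_exp_mul_inner (by positivity : 0 ≤ 2 * a) v).conjTranspose_mul_mul_same D
    using 1
  ext i j
  simp only [D, diagonal_conjTranspose, diagonal_mul, mul_diagonal, of_apply, star_trivial]
  rw [norm_sub_sq_real, ← exp_add, ← exp_add]
  ring_nf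

end Matrix

lemma integral_rpow_neg_half_mul_exp_neg_mul {a : ℝ} (ha : 0 < a) :
    ∫ t in Ioi (0 : ℝ), t ^ (-(1 / 2) : ℝ) * exp (-(a * t)) = √π / √a := by
  have h := integral_rpow_mul_exp_neg_mul_Ioi (by norm_num : (0 : ℝ) < 1 / 2) ha
  rw [show (1 : ℝ) / 2 - 1 = -(1 / 2) by norm_num, one_div a] at h
  rw [h, Gamma_one_half_eq, ← sqrt_eq_rpow, sqrt_inv, div_eq_inv_mul]

lemma integrableOn_rpow_neg_half_mul_exp_neg_mul {a : ℝ} (ha : 0 < a) :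
    IntegrableOn (fun t : ℝ => t ^ (-(1 / 2) : ℝ) * exp (-(a * t))) (Ioi 0) :=
  .of_integral_ne_zero <| by
    rw [integral_rpow_neg_half_mul_exp_neg_mul ha]
    have := sqrt_pos.2 ha
    positivity

lemma setIntegral_Ioi_pos_of_eventually_pos {f : ℝ → ℝ} {a : ℝ} (hf : IntegrableOn f (Ioi a))
    (hf0 : ∀ t ∈ Ioi a, 0 ≤ f t) (hpos : ∀ᶠ t in atTop, 0 < f t) :
    0 < ∫ t in Ioi a, f t := by
  rw [setIntegral_pos_iff_support_of_nonneg_ae ((ae_restrict_iff' measurableSet_Ioi).2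
    (.of_forall hf0)) hf]
  obtain ⟨T, hT⟩ := eventually_atTop.1 hpos
  have hsub : Ioi (max a T) ⊆ Function.support f ∩ Ioi a := fun t ht =>
    ⟨(hT t (le_of_max_le_right ht.le)).ne', lt_of_le_of_lt (le_max_left a T) ht⟩
  exact (by simp : (0 : ENNReal) < volume (Ioi (max a T))).trans_le (measure_mono hsub)

section Kernel

variable {ι E : Type*} [Fintype ι] [NormedAddCommGroup E]

noncomputable def gaussianQuadForm (y : ι → E) (c : ι → ℝ) (t : ℝ) : ℝ :=
  ∑ i, ∑ j, c i * c j * exp (-(t * ‖y i - y j‖ ^ 2))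

lemma tendsto_gaussianQuadForm_atTop {y : ι → E} (hy : Function.Injective y) (c : ι → ℝ) :
    Tendsto (gaussianQuadForm y c) atTop (𝓝 (∑ i, c i * c i)) := by
  classical
  have hdiag : ∑ i, c i * c i = ∑ i, ∑ j, if i = j then c i * c j else 0 := by simp
  rw [hdiag]
  refine tendsto_finsetSum _ fun i _ => tendsto_finsetSum _ fun j _ => ?_
  split_ifs with hij
  · simp [hij]
  · have hd : 0 < ‖y i - y j‖ ^ 2 := by
      have := sub_ne_zero.2 (hy.ne hij)
      positivity
    simpa using ((tendsto_exp_atBot.comp (tendsto_neg_atTop_atBot.comp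
      (tendsto_id.atTop_mul_const hd))).const_mul (c i * c j))

lemma rpow_neg_half_mul_exp_neg_mul_gaussianQuadForm (y : ι → E) (c : ι → ℝ) (t : ℝ) :
    t ^ (-(1 / 2) : ℝ) * exp (-t) * gaussianQuadForm y c t =
      ∑ i, ∑ j, c i * c j * (t ^ (-(1 / 2) : ℝ) * exp (-((1 + ‖y i - y j‖ ^ 2) * t))) := by
  simp only [gaussianQuadForm, Finset.mul_sum]
  refine Finset.sum_congr rfl fun i _ => Finset.sum_congr rfl fun j _ => ?_
  rw [show -((1 + ‖y i - y j‖ ^ 2) * t) = -t + -(t * ‖y i - y j‖ ^ 2) by ring, exp_add]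
  ring

lemma integrableOn_rpow_neg_half_mul_exp_neg_mul_gaussianQuadForm (y : ι → E) (c : ι → ℝ) :
    IntegrableOn (fun t => t ^ (-(1 / 2) : ℝ) * exp (-t) * gaussianQuadForm y c t) (Ioi 0) := by
  simp only [rpow_neg_half_mul_exp_neg_mul_gaussianQuadForm]
  exact integrable_finsetSum _ fun i _ => integrable_finsetSum _ fun j _ =>
    (integrableOn_rpow_neg_half_mul_exp_neg_mul (by positivity)).const_mul _

lemma integral_rpow_neg_half_mul_exp_neg_mul_gaussianQuadForm (y : ι → E) (c : ι → ℝ) :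
    ∫ t in Ioi (0 : ℝ), t ^ (-(1 / 2) : ℝ) * exp (-t) * gaussianQuadForm y c t =
      √π * ∑ i, ∑ j, c i * c j * (1 / √(1 + ‖y i - y j‖ ^ 2)) := by
  have hint : ∀ i j, IntegrableOn
      (fun t => c i * c j * (t ^ (-(1 / 2) : ℝ) * exp (-((1 + ‖y i - y j‖ ^ 2) * t)))) (Ioi 0) :=
    fun i j => (integrableOn_rpow_neg_half_mul_exp_neg_mul (by positivity)).const_mul _
  simp only [rpow_neg_half_mul_exp_neg_mul_gaussianQuadForm, Finset.mul_sum]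
  rw [integral_finsetSum _ fun i _ => integrable_finsetSum _ fun j _ => hint i j]
  refine Finset.sum_congr rfl fun i _ => ?_
  rw [integral_finsetSum _ fun j _ => hint i j]
  refine Finset.sum_congr rfl fun j _ => ?_
  rw [integral_const_mul, integral_rpow_neg_half_mul_exp_neg_mul (by positivity)]
  ring

variable [InnerProductSpace ℝ E]

lemma gaussianQuadForm_nonneg (y : ι → E) (c : ι → ℝ) {t : ℝ} (ht : 0 ≤ t) :
    0 ≤ gaussianQuadForm y c t := by
  simpa only [gaussianQuadForm, star_dotProduct_mulVec_eq_sum_sum, of_apply] using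
    (posSemidef_exp_neg_mul_norm_sub_sq ht y).dotProduct_mulVec_nonneg c

lemma sum_sum_mul_one_div_sqrt_one_add_norm_sub_sq_pos {y : ι → E} (hy : Function.Injective y)
    {c : ι → ℝ} (hc : c ≠ 0) :
    0 < ∑ i, ∑ j, c i * c j * (1 / √(1 + ‖y i - y j‖ ^ 2)) := by
  have hcc : 0 < ∑ i, c i * c i := by
    obtain ⟨i, hi⟩ := Function.ne_iff.1 hc
    exact Finset.sum_pos' (fun i _ => mul_self_nonneg _) ⟨i, Finset.mem_univ _, mul_self_pos.2 hi⟩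
  have hpos : 0 < ∫ t in Ioi (0 : ℝ), t ^ (-(1 / 2) : ℝ) * exp (-t) * gaussianQuadForm y c t := by
    refine setIntegral_Ioi_pos_of_eventually_pos
      (integrableOn_rpow_neg_half_mul_exp_neg_mul_gaussianQuadForm y c)
      (fun t ht => mul_nonneg (mul_nonneg (rpow_nonneg (le_of_lt ht) _) (exp_pos _).le)
        (gaussianQuadForm_nonneg y c (le_of_lt ht))) ?_
    filter_upwards [(tendsto_gaussianQuadForm_atTop hy c).eventually (eventually_gt_nhds hcc),
      eventually_gt_atTop 0] with t hG ht
    exact mul_pos (by positivity) hG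
  rw [integral_rpow_neg_half_mul_exp_neg_mul_gaussianQuadForm] at hpos
  exact pos_of_mul_pos_right hpos (sqrt_nonneg π)

end Kernel

theorem inverse_multiquadric_strictly_pos_def_general (d : ℕ) (ε : ℝ) (hε : 0 < ε)
    (n : ℕ) (x : Fin n → EuclideanSpace ℝ (Fin d))
    (hx : Function.Injective x) (c : Fin n → ℝ) (hc : c ≠ 0) :
    0 < ∑ i, ∑ j, c i * c j * (1 / Real.sqrt (1 + ε ^ 2 * ‖x i - x j‖ ^ 2)) ∧
    (Matrix.of fun i j => 1 / Real.sqrt (1 + ε ^ 2 * ‖x i - x j‖ ^ 2)).PosDef := by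
  have hscale : ∀ i j, ε ^ 2 * ‖x i - x j‖ ^ 2 = ‖ε • x i - ε • x j‖ ^ 2 := fun i j => by
    rw [← smul_sub, norm_smul, mul_pow, norm_eq_abs, sq_abs]
  have hpos : ∀ v : Fin n → ℝ, v ≠ 0 →
      0 < ∑ i, ∑ j, v i * v j * (1 / √(1 + ε ^ 2 * ‖x i - x j‖ ^ 2)) := fun v hv => by
    have hεx : Function.Injective (ε • x) := (smul_right_injective _ hε.ne').comp hx
    simpa only [hscale, Pi.smul_apply] using
      sum_sum_mul_one_div_sqrt_one_add_norm_sub_sq_pos hεx hv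
  refine ⟨hpos c hc, .of_dotProduct_mulVec_pos ?_ fun v hv => ?_⟩
  · ext i j
    simp [norm_sub_rev]
  · simpa only [star_dotProduct_mulVec_eq_sum_sum, of_apply] using hpos v hv

/-- The inverse multiquadric kernel `Φ(x) = (1 + ε²‖x‖²)^{−1/2}` is strictly positive
definite on `ℝ^d`: for pairwise distinct points `x_1, …, x_n` and every nonzero
`c ∈ ℝ^n`, the quadratic form `Σ_{i,j} c_i c_j (1 + ε²‖x_i − x_j‖²)^{−1/2}` is positive;
in particular the IMQ interpolation matrix is positive definite. -/
theorem inverse_multiquadric_strictly_pos_def (d : ℕ) (hd : 1 ≤ d) (ε : ℝ) (hε : 0 < ε)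
    (n : ℕ) (hn : 1 ≤ n) (x : Fin n → EuclideanSpace ℝ (Fin d))
    (hx : Function.Injective x) (c : Fin n → ℝ) (hc : c ≠ 0) :
    0 < ∑ i, ∑ j, c i * c j * (1 / Real.sqrt (1 + ε ^ 2 * ‖x i - x j‖ ^ 2)) ∧
    (Matrix.of fun i j => 1 / Real.sqrt (1 + ε ^ 2 * ‖x i - x j‖ ^ 2)).PosDef :=
  inverse_multiquadric_strictly_pos_def_general d ε hε n x hx c hc
end

section
/- For every dimension d ≥ 1, every n ≥ 1, every family of pairwise distinct points x_1, …, x_n ∈ ℝ^d, and every nonzero vector c ∈ ℝ^n satisfying Σ_i c_i = 0 and Σ_i c_i x_i = 0 (equivalently, Σ_i c_i p(x_i) = 0 for every polynomial p of total degree at most 1), one has Σ_{i,j} c_i c_j ‖x_i − x_j‖³ > 0; that is, the cubic radial kernel φ(x) = ‖x‖³ is strictly conditionally positive definite of order 2 on ℝ^d. -/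
/-!
Scaling `t ↦ t / r` gives `∫₀^∞ (e^{-tr} - 1 + tr) t^{-5/2} dt = C r^{3/2}` with `C > 0`.
Take `r = ‖x_i - x_j‖²` and sum against `c_i c_j`: the terms `-1` and `tr` drop out by the
moment conditions, because `Σ c_i c_j ‖x_i - x_j‖² = 2 (Σ c_i)(Σ c_i ‖x_i‖²) - 2 ‖Σ c_i x_i‖²`.
What is left is `∫₀^∞ (Σ c_i c_j e^{-t‖x_i - x_j‖²}) t^{-5/2} dt`, and the Gaussian kernel is
strictly positive definite. Indeed, after factoring out `e^{-t‖x_i‖²}` it becomes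
`e^{2t⟨x_i, x_j⟩}`, and its power series is the sum of squares
`Σ_k (2t)^k / k! Σ_p (Σ_i a_i x_i^p)²` over the monomials `x^p`. These squares cannot all
vanish: otherwise `Σ_i a_i e^{⟨x_i, y⟩} = 0` for every `y`, which contradicts the linear
independence of the distinct characters `y ↦ e^{⟨x_i, y⟩}`.
-/

open MeasureTheory Real Set Finset Function
open scoped RealInnerProductSpace Nat

lemma linearIndependent_exp_inner {κ F : Type*} [NormedAddCommGroup F] [InnerProductSpace ℝ F]
    {x : κ → F} (hx : Injective x) :
    LinearIndependent ℝ fun i (y : F) => exp ⟪x i, y⟫ := by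
  let χ : κ → Multiplicative F →* ℝ := fun i =>
    { toFun := fun y => exp ⟪x i, y.toAdd⟫
      map_one' := by simp
      map_mul' := fun y z => by rw [toAdd_mul, inner_add_right, exp_add] }
  have hχ : Injective χ := by
    intro i j hij
    have h := congrArg log (DFunLike.congr_fun hij (Multiplicative.ofAdd (x i - x j)))
    simp only [χ, MonoidHom.coe_mk, OneHom.coe_mk, toAdd_ofAdd, log_exp] at h
    rw [← sub_eq_zero, ← inner_sub_left, inner_self_eq_zero, sub_eq_zero] at h
    exact hx h
  exact (linearIndependent_monoidHom (Multiplicative F) ℝ).comp χ hχ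

section ExponentialKernel

variable {ι κ : Type*} [Fintype ι] [Fintype κ]

lemma inner_pow_eq_sum_prod (x y : EuclideanSpace ℝ ι) (k : ℕ) :
    ⟪x, y⟫ ^ k = ∑ p : Fin k → ι, (∏ l, x (p l)) * ∏ l, y (p l) := by
  simp only [PiLp.inner_apply, RCLike.inner_apply, conj_trivial, Fintype.sum_pow,
    ← prod_mul_distrib, mul_comm (y _)]

lemma sum_mul_inner_pow_eq (a : κ → ℝ) (x : κ → EuclideanSpace ℝ ι) (y : EuclideanSpace ℝ ι)
    (k : ℕ) :
    ∑ i, a i * ⟪x i, y⟫ ^ k = ∑ p : Fin k → ι, (∏ l, y (p l)) * ∑ i, a i * ∏ l, x i (p l) := by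
  simp only [inner_pow_eq_sum_prod, mul_sum]
  rw [sum_comm]
  exact sum_congr rfl fun _ _ => sum_congr rfl fun _ _ => by ring

lemma sum_sum_mul_inner_pow_eq (a : κ → ℝ) (x : κ → EuclideanSpace ℝ ι) (k : ℕ) :
    ∑ i, ∑ j, a i * a j * ⟪x i, x j⟫ ^ k =
      ∑ p : Fin k → ι, (∑ i, a i * ∏ l, x i (p l)) ^ 2 := by
  calc ∑ i, ∑ j, a i * a j * ⟪x i, x j⟫ ^ k
      = ∑ j, a j * ∑ i, a i * ⟪x i, x j⟫ ^ k := by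
        rw [sum_comm]
        exact sum_congr rfl fun _ _ => by rw [mul_sum]; exact sum_congr rfl fun _ _ => by ring
    _ = ∑ p : Fin k → ι, (∑ i, a i * ∏ l, x i (p l)) ^ 2 := by
        simp only [sum_mul_inner_pow_eq, mul_sum, sq, sum_mul]
        rw [sum_comm]
        exact sum_congr rfl fun _ _ => sum_congr rfl fun _ _ => sum_congr rfl fun _ _ => by ring

lemma hasSum_sum_mul_exp {α : Type*} [Fintype α] (a b : α → ℝ) :
    HasSum (fun k => (∑ i, a i * b i ^ k) / k !) (∑ i, a i * exp (b i)) := by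
  have := hasSum_sum (s := univ) fun i _ =>
    (NormedSpace.expSeries_div_hasSum_exp (b i)).mul_left (a i)
  simpa only [← exp_eq_exp_ℝ, sum_div, mul_div_assoc] using this

lemma exists_sum_mul_prod_ne_zero {x : κ → EuclideanSpace ℝ ι} (hx : Injective x) {a : κ → ℝ}
    (ha : a ≠ 0) : ∃ (k : ℕ) (p : Fin k → ι), ∑ i, a i * ∏ l, x i (p l) ≠ 0 := by
  by_contra! h
  refine ha (funext (Fintype.linearIndependent_iff.mp (linearIndependent_exp_inner hx) a ?_))
  funext y
  have := hasSum_sum_mul_exp a fun i => ⟪x i, y⟫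
  simp only [sum_mul_inner_pow_eq, h, mul_zero, sum_const_zero, zero_div] at this
  simpa [Finset.sum_apply] using this.unique hasSum_zero

lemma sum_sum_mul_exp_inner_pos {x : κ → EuclideanSpace ℝ ι} (hx : Injective x) {a : κ → ℝ}
    (ha : a ≠ 0) : 0 < ∑ i, ∑ j, a i * a j * exp ⟪x i, x j⟫ := by
  have hsum : HasSum (fun k => (∑ p : Fin k → ι, (∑ i, a i * ∏ l, x i (p l)) ^ 2) / k !)
      (∑ i, ∑ j, a i * a j * exp ⟪x i, x j⟫) := by
    convert hasSum_sum_mul_exp (fun q : κ × κ => a q.1 * a q.2) (fun q => ⟪x q.1, x q.2⟫) using 1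
    · funext k
      rw [← sum_sum_mul_inner_pow_eq, ← Fintype.sum_prod_type']
    · rw [← Fintype.sum_prod_type']
  obtain ⟨k, p, hp⟩ := exists_sum_mul_prod_ne_zero hx ha
  refine hasSum_lt (i := k) (fun k => by positivity) ?_ hasSum_zero hsum
  have : 0 < ∑ p : Fin k → ι, (∑ i, a i * ∏ l, x i (p l)) ^ 2 :=
    lt_of_lt_of_le (by positivity) (single_le_sum (fun p _ => sq_nonneg _) (mem_univ p))
  positivity

lemma sum_sum_mul_exp_neg_mul_norm_sub_sq_pos {x : κ → EuclideanSpace ℝ ι} (hx : Injective x)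
    {c : κ → ℝ} (hc : c ≠ 0) {t : ℝ} (ht : 0 < t) :
    0 < ∑ i, ∑ j, c i * c j * exp (-(t * ‖x i - x j‖ ^ 2)) := by
  -- With `a_i = c_i e^{-t‖x_i‖²}` and points `√(2t) • x_i` this is `Σ a_i a_j e^{⟨·, ·⟩}`.
  have hs : √(2 * t) ≠ 0 := by positivity
  have ha : (fun i => c i * exp (-(t * ‖x i‖ ^ 2))) ≠ 0 := by
    contrapose! hc
    funext i
    simpa using congrFun hc i
  refine (sum_sum_mul_exp_inner_pos ((smul_right_injective _ hs).comp hx) ha).trans_eq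
    (sum_congr rfl fun i _ => sum_congr rfl fun j _ => ?_)
  have hexp : exp (-(t * ‖x i - x j‖ ^ 2)) =
      exp (-(t * ‖x i‖ ^ 2)) * exp (-(t * ‖x j‖ ^ 2)) * exp (2 * t * ⟪x i, x j⟫) := by
    rw [← exp_add, ← exp_add, norm_sub_sq_real]
    ring_nf
  simp only [comp_apply, real_inner_smul_left, real_inner_smul_right, ← mul_assoc,
    mul_self_sqrt (by positivity : (0 : ℝ) ≤ 2 * t), hexp]
  ring

end ExponentialKernel

lemma setIntegral_pos_of_pos {X : Type*} [MeasurableSpace X] {μ : Measure X} {s : Set X}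
    {f : X → ℝ} (hs : MeasurableSet s) (hμs : μ s ≠ 0) (hf : IntegrableOn f s μ)
    (hpos : ∀ x ∈ s, 0 < f x) : 0 < ∫ x in s, f x ∂μ := by
  rw [setIntegral_pos_iff_support_of_nonneg_ae ((ae_restrict_iff' hs).mpr
    (Filter.Eventually.of_forall fun x hx => (hpos x hx).le)) hf]
  exact (pos_iff_ne_zero.mpr hμs).trans_le
    (measure_mono fun x hx => ⟨(hpos x hx).ne', hx⟩)

noncomputable def expNegRemainder (s : ℝ) : ℝ := exp (-s) - 1 + s

lemma expNegRemainder_zero : expNegRemainder 0 = 0 := by simp [expNegRemainder]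

lemma expNegRemainder_pos {s : ℝ} (hs : s ≠ 0) : 0 < expNegRemainder s := by
  have := add_one_lt_exp (neg_ne_zero.mpr hs)
  unfold expNegRemainder
  linarith

lemma expNegRemainder_nonneg (s : ℝ) : 0 ≤ expNegRemainder s := by
  rcases eq_or_ne s 0 with rfl | hs
  · exact expNegRemainder_zero.ge
  · exact (expNegRemainder_pos hs).le

lemma expNegRemainder_le_self {s : ℝ} (hs : 0 ≤ s) : expNegRemainder s ≤ s := by
  have := exp_le_one_iff.mpr (neg_nonpos.mpr hs)
  unfold expNegRemainder
  linarith

lemma expNegRemainder_le_sq {s : ℝ} (hs : 0 ≤ s) : expNegRemainder s ≤ s ^ 2 := by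
  rcases le_or_gt s 1 with hs1 | hs1
  · have := abs_exp_sub_one_sub_id_le (x := -s) (by rwa [abs_neg, abs_of_nonneg hs])
    rw [neg_sq, sub_neg_eq_add] at this
    exact (le_abs_self _).trans this
  · nlinarith [expNegRemainder_le_self hs]

noncomputable def cubicIntegrand (r t : ℝ) : ℝ := expNegRemainder (t * r) * t ^ (-(5 / 2) : ℝ)

lemma cubicIntegrand_zero : cubicIntegrand 0 = 0 := by
  funext t
  simp [cubicIntegrand, expNegRemainder_zero]

lemma cubicIntegrand_nonneg (r : ℝ) {t : ℝ} (ht : 0 ≤ t) : 0 ≤ cubicIntegrand r t :=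
  mul_nonneg (expNegRemainder_nonneg _) (rpow_nonneg ht _)

lemma continuousOn_cubicIntegrand (r : ℝ) : ContinuousOn (cubicIntegrand r) (Ioi 0) := by
  unfold cubicIntegrand expNegRemainder
  exact ContinuousOn.mul (by fun_prop)
    (continuousOn_id.rpow_const fun t ht => Or.inl (ne_of_gt ht))

lemma integrableOn_cubicIntegrand_one : IntegrableOn (cubicIntegrand 1) (Ioi 0) := by
  have dominated : ∀ (s : Set ℝ) (p : ℝ), s ⊆ Ioi 0 → MeasurableSet s →
      IntegrableOn (fun t : ℝ => t ^ (p - 5 / 2)) s → (∀ t ∈ s, expNegRemainder t ≤ t ^ p) →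
      IntegrableOn (cubicIntegrand 1) s := by
    intro s p hs hms hg hle
    refine hg.mono' (((continuousOn_cubicIntegrand 1).mono hs).aestronglyMeasurable hms) ?_
    filter_upwards [ae_restrict_mem hms] with t ht
    have ht0 : 0 < t := hs ht
    rw [norm_of_nonneg (cubicIntegrand_nonneg 1 ht0.le), sub_eq_add_neg, rpow_add ht0,
      cubicIntegrand, mul_one]
    exact mul_le_mul_of_nonneg_right (hle t ht) (rpow_nonneg ht0.le _)
  rw [← Ioc_union_Ioi_eq_Ioi zero_le_one]
  refine (dominated _ 2 Ioc_subset_Ioi_self measurableSet_Ioc ?_ ?_).union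
    (dominated _ 1 (Ioi_subset_Ioi zero_le_one) measurableSet_Ioi ?_ ?_)
  · exact (intervalIntegrable_iff_integrableOn_Ioc_of_le zero_le_one).mp
      (intervalIntegral.intervalIntegrable_rpow' (by norm_num))
  · exact fun t ht => by simpa using expNegRemainder_le_sq ht.1.le
  · exact integrableOn_Ioi_rpow_of_lt (by norm_num) zero_lt_one
  · exact fun t ht => by simpa using expNegRemainder_le_self (zero_le_one.trans ht.le)

lemma cubicIntegrand_eq_smul_comp_mul {r : ℝ} (hr : 0 < r) {t : ℝ} (ht : 0 < t) :
    cubicIntegrand r t = r ^ (5 / 2 : ℝ) * cubicIntegrand 1 (t * r) := by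
  have h : r ^ (5 / 2 : ℝ) * r ^ (-(5 / 2) : ℝ) = 1 := by
    rw [← rpow_add hr]
    norm_num
  rw [cubicIntegrand, cubicIntegrand, mul_one, mul_rpow ht.le hr.le]
  linear_combination (-(expNegRemainder (t * r) * t ^ (-(5 / 2) : ℝ))) * h

lemma integrableOn_cubicIntegrand {r : ℝ} (hr : 0 ≤ r) :
    IntegrableOn (cubicIntegrand r) (Ioi 0) := by
  rcases hr.eq_or_lt with rfl | hr
  · rw [cubicIntegrand_zero]
    exact integrableOn_zero
  refine IntegrableOn.congr_fun ?_ (fun t ht => (cubicIntegrand_eq_smul_comp_mul hr ht).symm)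
    measurableSet_Ioi
  refine Integrable.const_mul
    ((integrableOn_Ioi_comp_mul_right_iff (cubicIntegrand 1) 0 hr).mpr ?_) _
  simpa using integrableOn_cubicIntegrand_one

lemma integral_cubicIntegrand {r : ℝ} (hr : 0 ≤ r) :
    ∫ t in Ioi 0, cubicIntegrand r t = r ^ (3 / 2 : ℝ) * ∫ t in Ioi 0, cubicIntegrand 1 t := by
  rcases hr.eq_or_lt with rfl | hr
  · simp [cubicIntegrand_zero]
  rw [setIntegral_congr_fun measurableSet_Ioi fun t ht => cubicIntegrand_eq_smul_comp_mul hr ht,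
    integral_const_mul, integral_comp_mul_right_Ioi _ _ hr, zero_mul, smul_eq_mul, ← mul_assoc,
    ← rpow_neg_one, ← rpow_add hr]
  norm_num

lemma integral_cubicIntegrand_one_pos : 0 < ∫ t in Ioi 0, cubicIntegrand 1 t :=
  setIntegral_pos_of_pos measurableSet_Ioi (by simp) integrableOn_cubicIntegrand_one
    fun t ht => mul_pos (expNegRemainder_pos (by simpa using ht.ne')) (rpow_pos_of_pos ht _)

lemma integrableOn_mul_cubicIntegrand_norm_sub_sq {κ F : Type*} [SeminormedAddCommGroup F]
    (c : κ → ℝ) (x : κ → F) (i j : κ) :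
    IntegrableOn (fun t => c i * c j * cubicIntegrand (‖x i - x j‖ ^ 2) t) (Ioi 0) :=
  (integrableOn_cubicIntegrand (by positivity)).const_mul _

lemma integral_sum_sum_mul_cubicIntegrand {κ F : Type*} [Fintype κ] [SeminormedAddCommGroup F]
    (c : κ → ℝ) (x : κ → F) :
    ∫ t in Ioi 0, ∑ i, ∑ j, c i * c j * cubicIntegrand (‖x i - x j‖ ^ 2) t =
      (∑ i, ∑ j, c i * c j * ‖x i - x j‖ ^ 3) * ∫ t in Ioi 0, cubicIntegrand 1 t := by
  have hint := integrableOn_mul_cubicIntegrand_norm_sub_sq c x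
  rw [integral_finsetSum _ fun i _ => integrable_finsetSum _ fun j _ => hint i j, sum_mul]
  refine sum_congr rfl fun i _ => ?_
  rw [integral_finsetSum _ fun j _ => hint i j, sum_mul]
  refine sum_congr rfl fun j _ => ?_
  rw [integral_const_mul, integral_cubicIntegrand (by positivity), ← rpow_natCast,
    ← rpow_mul (norm_nonneg _)]
  norm_num
  ring

section Moments

variable {F κ : Type*} [NormedAddCommGroup F] [InnerProductSpace ℝ F] [Fintype κ]

lemma sum_sum_mul_norm_sub_sq_eq_zero {c : κ → ℝ} {x : κ → F} (hc0 : ∑ i, c i = 0)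
    (hc1 : ∑ i, c i • x i = 0) : ∑ i, ∑ j, c i * c j * ‖x i - x j‖ ^ 2 = 0 := by
  have hinner : ∑ i, ∑ j, c i * c j * ⟪x i, x j⟫ = ⟪∑ i, c i • x i, ∑ j, c j • x j⟫ := by
    simp only [sum_inner, inner_sum, real_inner_smul_left, real_inner_smul_right, mul_assoc]
    exact sum_congr rfl fun i _ => sum_congr rfl fun j _ => by rw [real_inner_comm]
  rw [hc1, inner_zero_left] at hinner
  have expand : ∀ i j, c i * c j * ‖x i - x j‖ ^ 2 =
      c j * (c i * ‖x i‖ ^ 2) + c i * (c j * ‖x j‖ ^ 2) - 2 * (c i * c j * ⟪x i, x j⟫) := by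
    intro i j
    rw [norm_sub_sq_real]
    ring
  simp only [expand, sum_add_distrib, sum_sub_distrib, ← mul_sum, ← sum_mul, hc0, hinner,
    zero_mul, mul_zero, sum_const_zero, add_zero, sub_zero]

lemma sum_sum_mul_cubicIntegrand {c : κ → ℝ} {x : κ → F} (hc0 : ∑ i, c i = 0)
    (hc1 : ∑ i, c i • x i = 0) (t : ℝ) :
    ∑ i, ∑ j, c i * c j * cubicIntegrand (‖x i - x j‖ ^ 2) t =
      (∑ i, ∑ j, c i * c j * exp (-(t * ‖x i - x j‖ ^ 2))) * t ^ (-(5 / 2) : ℝ) := by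
  have hc00 : ∑ i, ∑ j, c i * c j = 0 := by rw [← sum_mul_sum, hc0, zero_mul]
  have expand : ∀ i j, c i * c j * cubicIntegrand (‖x i - x j‖ ^ 2) t =
      c i * c j * exp (-(t * ‖x i - x j‖ ^ 2)) * t ^ (-(5 / 2) : ℝ) -
        c i * c j * t ^ (-(5 / 2) : ℝ) +
        c i * c j * ‖x i - x j‖ ^ 2 * (t * t ^ (-(5 / 2) : ℝ)) := by
    intro i j
    simp only [cubicIntegrand, expNegRemainder]
    ring
  simp only [expand, sum_add_distrib, sum_sub_distrib, ← sum_mul, hc00,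
    sum_sum_mul_norm_sub_sq_eq_zero hc0 hc1, zero_mul, sub_zero, add_zero]

end Moments

theorem cubic_kernel_strictly_cond_pos_def_order_two_general (d : ℕ)
    (n : ℕ) (x : Fin n → EuclideanSpace ℝ (Fin d))
    (hx : Function.Injective x) (c : Fin n → ℝ) (hc : c ≠ 0)
    (hc0 : ∑ i, c i = 0) (hc1 : ∑ i, c i • x i = 0) :
    0 < ∑ i, ∑ j, c i * c j * ‖x i - x j‖ ^ 3 := by
  have hpos : 0 < ∫ t in Ioi 0, ∑ i, ∑ j, c i * c j * cubicIntegrand (‖x i - x j‖ ^ 2) t := by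
    refine setIntegral_pos_of_pos measurableSet_Ioi (by simp)
      (integrable_finsetSum _ fun i _ => integrable_finsetSum _ fun j _ =>
        integrableOn_mul_cubicIntegrand_norm_sub_sq c x i j) fun t ht => ?_
    rw [sum_sum_mul_cubicIntegrand hc0 hc1]
    exact mul_pos (sum_sum_mul_exp_neg_mul_norm_sub_sq_pos hx hc ht) (rpow_pos_of_pos ht _)
  rw [integral_sum_sum_mul_cubicIntegrand] at hpos
  exact pos_of_mul_pos_left hpos integral_cubicIntegrand_one_pos.le

/-- The cubic radial kernel `φ(x) = ‖x‖³` is strictly conditionally positive definite of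
order 2 on `ℝ^d`: for pairwise distinct points `x_1, …, x_n` and every nonzero `c ∈ ℝ^n`
with `Σ_i c_i = 0` and `Σ_i c_i x_i = 0`, one has `Σ_{i,j} c_i c_j ‖x_i − x_j‖³ > 0`. -/
theorem cubic_kernel_strictly_cond_pos_def_order_two (d : ℕ) (hd : 1 ≤ d)
    (n : ℕ) (hn : 1 ≤ n) (x : Fin n → EuclideanSpace ℝ (Fin d))
    (hx : Function.Injective x) (c : Fin n → ℝ) (hc : c ≠ 0)
    (hc0 : ∑ i, c i = 0) (hc1 : ∑ i, c i • x i = 0) :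
    0 < ∑ i, ∑ j, c i * c j * ‖x i - x j‖ ^ 3 :=
  cubic_kernel_strictly_cond_pos_def_order_two_general d n x hx c hc hc0 hc1
end

section
/- Let d ≥ 1, let Ω ⊂ ℝ^d be a nonempty compact set, let S : Ω × Ω → ℝ be continuous, and let u : Ω → ℝ be continuous. Then for every x ∈ Ω the function t ↦ ln‖x − t‖ · S(x,t) · u(t) is Lebesgue integrable on Ω, and the function F u : Ω → ℝ defined by (F u)(x) = ∫_Ω ln‖x − t‖ · S(x,t) · u(t) dt is continuous on Ω. -/
/-!
By polar coordinates, `log ‖·‖` is locally integrable on `ℝ^d` for `d ≥ 1`, since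
`r ^ (d - 1) * log r` is integrable near `0`. For a locally integrable kernel `K` and `g`
continuous on the compact set `Ω × Ω`, the function `x ↦ ∫_Ω K (x - t) g (x, t) dt` moves,
uniformly in `x ∈ Ω`, by at most `sup |g| · ‖K - K'‖_{L¹(Ω - Ω)}` when `K` is replaced by `K'`.
Approximating `K` in `L¹(Ω - Ω)` by continuous kernels, for which continuity follows by dominated
convergence, exhibits the operator as a uniform limit of continuous functions.
-/

open MeasureTheory Metric Set
open scoped Pointwise

theorem IsCompact.sub {G : Type*} [TopologicalSpace G] [Sub G] [ContinuousSub G] {s t : Set G}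
    (hs : IsCompact s) (ht : IsCompact t) : IsCompact (s - t) := by
  rw [← sub_image_prod]
  exact (hs.prod ht).image continuous_sub

section

variable {X Y G : Type*} [TopologicalSpace X] [FirstCountableTopology X]
  [TopologicalSpace Y] [T2Space Y] [MeasurableSpace Y] [OpensMeasurableSpace Y]
  [NormedAddCommGroup G] [NormedSpace ℝ G] {μ : Measure Y} [IsFiniteMeasureOnCompacts μ]

theorem continuousOn_setIntegral_of_continuousOn_prod {f : X × Y → G} {s : Set X} {k : Set Y}
    (hs : IsCompact s) (hk : IsCompact k) (hf : ContinuousOn f (s ×ˢ k)) :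
    ContinuousOn (fun x => ∫ t in k, f (x, t) ∂μ) s := by
  obtain ⟨C, hC⟩ := (hs.prod hk).exists_bound_of_continuousOn hf
  have hslice : ∀ x ∈ s, ContinuousOn (fun t => f (x, t)) k := fun x hx =>
    hf.comp (Continuous.continuousOn (by fun_prop)) fun t ht => ⟨hx, ht⟩
  refine continuousOn_of_dominated (bound := fun _ => C)
    (fun x hx => (hslice x hx).aestronglyMeasurable_of_isCompact hk hk.measurableSet)
    (fun x hx => ae_restrict_of_forall_mem hk.measurableSet fun t ht => hC _ ⟨hx, ht⟩)
    (integrableOn_const hk.measure_lt_top.ne) ?_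
  filter_upwards [ae_restrict_mem hk.measurableSet] with t ht
  exact hf.comp (Continuous.continuousOn (by fun_prop)) fun x hx => ⟨hx, ht⟩

end

section

variable {E : Type*} [NormedAddCommGroup E] [NormedSpace ℝ E] [FiniteDimensional ℝ E]
  [MeasurableSpace E] [BorelSpace E] {μ : Measure E} [μ.IsAddHaarMeasure]

theorem MeasureTheory.LocallyIntegrable.comp_sub_left {K : E → ℝ} (hK : LocallyIntegrable K μ)
    (x : E) : LocallyIntegrable (fun t => K (x - t)) μ := by
  rw [← (Measure.measurePreserving_sub_left μ x).map_eq] at hK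
  exact (locallyIntegrable_map_homeomorph (Homeomorph.subLeft x)).1 hK

theorem setIntegral_comp_sub_left_le {h : E → ℝ} {Ω B : Set E} {x : E} (hBm : MeasurableSet B)
    (hB : IntegrableOn h B μ) (h0 : ∀ s ∈ B, 0 ≤ h s) (hΩB : ∀ t ∈ Ω, x - t ∈ B) :
    ∫ t in Ω, h (x - t) ∂μ ≤ ∫ s in B, h s ∂μ := by
  have hmp := Measure.measurePreserving_sub_left μ x
  have he := (Homeomorph.subLeft x).measurableEmbedding
  calc ∫ t in Ω, h (x - t) ∂μ ≤ ∫ t in (x - ·) ⁻¹' B, h (x - t) ∂μ :=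
        setIntegral_mono_set ((hmp.integrableOn_comp_preimage he).2 hB)
          (ae_restrict_of_forall_mem (hBm.preimage he.measurable) fun t ht => h0 _ ht)
          (LE.le.eventuallyLE hΩB)
    _ = ∫ s in B, h s ∂μ := hmp.setIntegral_preimage_emb he h B

theorem integrableOn_comp_sub_mul {K : E → ℝ} {g : E × E → ℝ} {Ω : Set E} {x : E}
    (hK : LocallyIntegrable K μ) (hΩ : IsCompact Ω) (hg : ContinuousOn g (Ω ×ˢ Ω)) (hx : x ∈ Ω) :
    IntegrableOn (fun t => K (x - t) * g (x, t)) Ω μ :=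
  ((hK.comp_sub_left x).integrableOn_isCompact hΩ).mul_continuousOn
    (hg.comp (Continuous.continuousOn (by fun_prop)) fun _ ht => ⟨hx, ht⟩) hΩ

theorem dist_setIntegral_comp_sub_mul_le {K K' : E → ℝ} {g : E × E → ℝ} {Ω : Set E} {C : ℝ}
    {x : E}
    (hK : LocallyIntegrable K μ) (hK' : LocallyIntegrable K' μ) (hΩ : IsCompact Ω)
    (hg : ContinuousOn g (Ω ×ˢ Ω)) (hC : ∀ p ∈ Ω ×ˢ Ω, ‖g p‖ ≤ C) (hx : x ∈ Ω) :
    dist (∫ t in Ω, K (x - t) * g (x, t) ∂μ) (∫ t in Ω, K' (x - t) * g (x, t) ∂μ) ≤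
      C * ∫ s in Ω - Ω, |K s - K' s| ∂μ := by
  have hB : IsCompact (Ω - Ω) := hΩ.sub hΩ
  have hdiff : IntegrableOn (fun t => |K (x - t) - K' (x - t)|) Ω μ :=
    (((hK.sub hK').comp_sub_left x).integrableOn_isCompact hΩ).abs
  rw [dist_eq_norm, ← integral_sub (integrableOn_comp_sub_mul hK hΩ hg hx)
    (integrableOn_comp_sub_mul hK' hΩ hg hx)]
  calc ‖∫ t in Ω, K (x - t) * g (x, t) - K' (x - t) * g (x, t) ∂μ‖
      ≤ ∫ t in Ω, |K (x - t) - K' (x - t)| * C ∂μ := by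
        refine norm_integral_le_of_norm_le (hdiff.mul_const C)
          (ae_restrict_of_forall_mem hΩ.measurableSet fun t ht => ?_)
        rw [← sub_mul, norm_mul, Real.norm_eq_abs]
        exact mul_le_mul_of_nonneg_left (hC _ ⟨hx, ht⟩) (abs_nonneg _)
    _ ≤ C * ∫ s in Ω - Ω, |K s - K' s| ∂μ := by
        rw [integral_mul_const, mul_comm]
        gcongr
        · exact (norm_nonneg _).trans (hC (x, x) ⟨hx, hx⟩)
        · exact setIntegral_comp_sub_left_le hB.measurableSet
            ((hK.sub hK').integrableOn_isCompact hB).abs (fun _ _ => abs_nonneg _)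
            fun t ht => sub_mem_sub hx ht

theorem continuousOn_setIntegral_comp_sub_mul {K : E → ℝ} {g : E × E → ℝ} {Ω : Set E}
    (hK : LocallyIntegrable K μ) (hΩ : IsCompact Ω) (hg : ContinuousOn g (Ω ×ˢ Ω)) :
    ContinuousOn (fun x => ∫ t in Ω, K (x - t) * g (x, t) ∂μ) Ω := by
  obtain ⟨C, hC0, hC⟩ : ∃ C, 0 < C ∧ ∀ p ∈ Ω ×ˢ Ω, ‖g p‖ ≤ C := by
    obtain ⟨C, hC⟩ := (hΩ.prod hΩ).exists_bound_of_continuousOn hg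
    exact ⟨max C 1, by positivity, fun p hp => (hC p hp).trans (le_max_left _ _)⟩
  have hB : IsCompact (Ω - Ω) := hΩ.sub hΩ
  have := Measure.Regular.restrict_of_measure_ne_top (μ := μ) hB.measure_lt_top.ne
  refine continuousOn_of_uniform_approx_of_continuousOn fun U hU => ?_
  obtain ⟨ε, hε, hεU⟩ := Metric.mem_uniformity_dist.1 hU
  obtain ⟨K', -, hK'K, hK'c, -⟩ :=
    (hK.integrableOn_isCompact hB).exists_hasCompactSupport_integral_sub_le
      (ε := ε / (2 * C)) (by positivity)
  refine ⟨fun x => ∫ t in Ω, K' (x - t) * g (x, t) ∂μ,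
    continuousOn_setIntegral_of_continuousOn_prod hΩ hΩ
      ((hK'c.comp continuous_sub).continuousOn.mul hg), fun x hx => hεU ?_⟩
  calc _ ≤ C * ∫ s in Ω - Ω, |K s - K' s| ∂μ :=
        dist_setIntegral_comp_sub_mul_le hK hK'c.locallyIntegrable hΩ hg hC hx
    _ ≤ C * (ε / (2 * C)) := by
        simp only [Real.norm_eq_abs] at hK'K
        gcongr
    _ = ε / 2 := by field_simp
    _ < ε := half_lt_self hε

variable [Nontrivial E]

theorem integrableOn_ball_log_norm (r : ℝ) :
    IntegrableOn (fun x : E => Real.log ‖x‖) (ball 0 r) μ := by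
  rw [integrableOn_fun_norm_addHaar]
  have hlog : IntegrableOn Real.log (Icc 0 r) :=
    ((intervalIntegrable_iff' (by simp)).1 intervalIntegral.intervalIntegrable_log').mono_set
      Icc_subset_uIcc
  exact ((hlog.continuousOn_mul (continuous_pow _).continuousOn isCompact_Icc).mono_set
    Ioo_subset_Icc_self)

theorem locallyIntegrable_log_norm : LocallyIntegrable (fun x : E => Real.log ‖x‖) μ :=
  fun x => ⟨ball 0 (‖x‖ + 1), isOpen_ball.mem_nhds (by simp), integrableOn_ball_log_norm _⟩

end

theorem log_kernel_operator_integrable_and_continuous_general (d : ℕ) (hd : 1 ≤ d)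
    (Ω : Set (EuclideanSpace ℝ (Fin d))) (hΩ : IsCompact Ω)
    (S : EuclideanSpace ℝ (Fin d) × EuclideanSpace ℝ (Fin d) → ℝ)
    (hS : ContinuousOn S (Ω ×ˢ Ω))
    (u : EuclideanSpace ℝ (Fin d) → ℝ) (hu : ContinuousOn u Ω) :
    (∀ x ∈ Ω, IntegrableOn (fun t => Real.log ‖x - t‖ * S (x, t) * u t) Ω volume) ∧
    ContinuousOn (fun x => ∫ t in Ω, Real.log ‖x - t‖ * S (x, t) * u t) Ω := by
  have : Nonempty (Fin d) := ⟨⟨0, hd⟩⟩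
  have hK := locallyIntegrable_log_norm (E := EuclideanSpace ℝ (Fin d)) (μ := volume)
  have hg : ContinuousOn (fun p => S p * u p.2) (Ω ×ˢ Ω) :=
    hS.mul (hu.comp continuousOn_snd fun _ hp => hp.2)
  simp_rw [mul_assoc]
  exact ⟨fun x hx => integrableOn_comp_sub_mul hK hΩ hg hx,
    continuousOn_setIntegral_comp_sub_mul hK hΩ hg⟩

/-- For a nonempty compact `Ω ⊂ ℝ^d`, continuous `S : Ω × Ω → ℝ` and continuous
`u : Ω → ℝ`, the weakly singular integrand `t ↦ ln‖x − t‖ · S(x,t) · u(t)` is Lebesgue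
integrable on `Ω` for every `x ∈ Ω`, and `x ↦ ∫_Ω ln‖x − t‖ · S(x,t) · u(t) dt` is
continuous on `Ω`. -/
theorem log_kernel_operator_integrable_and_continuous (d : ℕ) (hd : 1 ≤ d)
    (Ω : Set (EuclideanSpace ℝ (Fin d))) (hΩ : IsCompact Ω) (hne : Ω.Nonempty)
    (S : EuclideanSpace ℝ (Fin d) × EuclideanSpace ℝ (Fin d) → ℝ)
    (hS : ContinuousOn S (Ω ×ˢ Ω))
    (u : EuclideanSpace ℝ (Fin d) → ℝ) (hu : ContinuousOn u Ω) :
    (∀ x ∈ Ω, IntegrableOn (fun t => Real.log ‖x - t‖ * S (x, t) * u t) Ω volume) ∧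
    ContinuousOn (fun x => ∫ t in Ω, Real.log ‖x - t‖ * S (x, t) * u t) Ω :=
  log_kernel_operator_integrable_and_continuous_general d hd Ω hΩ S hS u hu
end

section
/- Let X be a real Banach space, let T : X → X be a compact bounded linear operator, and let (T_m)_{m≥1} be a sequence of bounded linear operators on X such that (i) T_m x → T x in X for every x ∈ X, and (ii) the family (T_m) is collectively compact, i.e. the set ⋃_m { T_m x : ‖x‖ ≤ 1 } has compact closure in X. Let λ ∈ ℝ and suppose the operator I − λT is bijective. Then there exist N ∈ ℕ and a constant C > 0 such that for every m ≥ N the operator I − λT_m is bijective and its inverse satisfies ‖(I − λT_m)^{-1} y‖ ≤ C ‖y‖ for all y ∈ X. -/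
/-!
Write `B_m = 1 - λT_m` and `S = (1 - λT)⁻¹`. Since `S = 1 + λST = 1 + λTS`, the operator
`L_m = 1 + λST_m` is a two-sided approximate inverse of `B_m`:
`L_m B_m = 1 + λ²S(T - T_m)T_m` and `B_m L_m = 1 + λ²(T - T_m)ST_m`.
By Banach–Steinhaus the `T_m` are equicontinuous, so they converge uniformly on compact sets; and
collective compactness puts the images of the unit ball under all `T_m` and all `ST_m` into one
compact set. Hence both error terms tend to `0` in operator norm. The first identity then gives
`‖x‖ ≤ 2‖L_m‖‖B_m x‖` with `‖L_m‖` bounded uniformly in `m`, and the second a right inverse of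
`B_m` through a Neumann series.
-/

open Filter Topology Metric Set

section CollectivelyCompact

variable {𝕜 E F G : Type*} [NontriviallyNormedField 𝕜]
  [NormedAddCommGroup E] [NormedSpace 𝕜 E] [NormedAddCommGroup F] [NormedSpace 𝕜 F]
  [NormedAddCommGroup G] [NormedSpace 𝕜 G]

def CollectivelyCompact {ι : Type*} (A : ι → E →L[𝕜] F) : Prop :=
  IsCompact (closure (⋃ i, ⇑(A i) '' closedBall 0 1))

theorem CollectivelyCompact.comp_left {ι : Type*} {A : ι → E →L[𝕜] F}
    (hA : CollectivelyCompact A) (U : F →L[𝕜] G) :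
    CollectivelyCompact fun i => U.comp (A i) := by
  have hUK := hA.image U.continuous
  refine hUK.of_isClosed_subset isClosed_closure (closure_minimal ?_ hUK.isClosed)
  simp only [ContinuousLinearMap.coe_comp, image_comp, ← image_iUnion]
  exact image_mono subset_closure

theorem ContinuousLinearMap.exists_forall_norm_le_of_tendsto [CompleteSpace E]
    {T : E →L[𝕜] F} {Tm : ℕ → E →L[𝕜] F}
    (hconv : ∀ x, Tendsto (fun m => Tm m x) atTop (𝓝 (T x))) : ∃ C, ∀ m, ‖Tm m‖ ≤ C :=
  banach_steinhaus fun x =>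
    let ⟨C, hC⟩ := (hconv x).norm.bddAbove_range
    ⟨C, fun m => hC ⟨m, rfl⟩⟩

theorem ContinuousLinearMap.tendstoUniformlyOn_of_tendsto [CompleteSpace E]
    {T : E →L[𝕜] F} {Tm : ℕ → E →L[𝕜] F}
    (hconv : ∀ x, Tendsto (fun m => Tm m x) atTop (𝓝 (T x))) {K : Set E} (hK : IsCompact K) :
    TendstoUniformlyOn (fun m => ⇑(Tm m)) T atTop K := by
  have hbdd := exists_forall_norm_le_of_tendsto hconv
  have hequi : Equicontinuous (K.domRestrict ∘ fun m => ⇑(Tm m)) :=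
    (equicontinuous_restrict_iff _).2
      (Equicontinuous.equicontinuousOn (((NormedSpace.equicontinuous_TFAE Tm).out 5 1).1 hbdd) K)
  have : CompactSpace K := isCompact_iff_compactSpace.mp hK
  rw [tendstoUniformlyOn_iff_tendstoUniformly_comp_coe]
  exact UniformFun.tendsto_iff_tendstoUniformly.1
    ((hequi.tendsto_uniformFun_iff_pi _ _).2 (tendsto_pi_nhds.2 fun x => hconv x))

theorem CollectivelyCompact.tendsto_opNorm_sub_comp [NormedAlgebra ℝ 𝕜] [CompleteSpace E]
    {T : E →L[𝕜] F} {Tm : ℕ → E →L[𝕜] F}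
    (hconv : ∀ x, Tendsto (fun m => Tm m x) atTop (𝓝 (T x)))
    {A : ℕ → G →L[𝕜] E} (hA : CollectivelyCompact A) :
    Tendsto (fun m => ‖(T - Tm m).comp (A m)‖) atTop (𝓝 0) := by
  have hunif := Metric.tendstoUniformlyOn_iff.1
    (ContinuousLinearMap.tendstoUniformlyOn_of_tendsto hconv hA)
  refine Metric.tendsto_nhds.2 fun ε hε => ?_
  filter_upwards [hunif (ε / 2) (half_pos hε)] with m hm
  have hle : ‖(T - Tm m).comp (A m)‖ ≤ ε / 2 := by
    refine ContinuousLinearMap.opNorm_le_of_unit_norm (half_pos hε).le fun x hx => ?_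
    have hx' : A m x ∈ closure (⋃ i, ⇑(A i) '' closedBall 0 1) :=
      subset_closure (mem_iUnion.2 ⟨m, x, by simp [hx], rfl⟩)
    simpa [dist_eq_norm] using (hm _ hx').le
  rw [dist_zero_right, norm_norm]
  linarith

end CollectivelyCompact

section ApproximateInverse

theorem one_add_mul_mul_one_sub {R : Type*} [Ring R] {s a b : R} (h : s * (1 - a) = 1) :
    (1 + s * b) * (1 - b) = 1 + s * ((a - b) * b) := by
  have hsa : s * a = s - 1 := by rw [← h]; noncomm_ring
  calc (1 + s * b) * (1 - b) = 1 + (s - 1) * b - s * b * b := by noncomm_ring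
    _ = 1 + s * ((a - b) * b) := by rw [← hsa]; noncomm_ring

theorem one_sub_mul_one_add_mul {R : Type*} [Ring R] {s a b : R} (h : (1 - a) * s = 1) :
    (1 - b) * (1 + s * b) = 1 + (a - b) * (s * b) := by
  have has : a * s = s - 1 := by rw [← h]; noncomm_ring
  calc (1 - b) * (1 + s * b) = 1 + (s - 1) * b - b * s * b := by noncomm_ring
    _ = 1 + (a - b) * (s * b) := by rw [← has]; noncomm_ring

variable {𝕜 E : Type*} [NontriviallyNormedField 𝕜] [NormedAddCommGroup E] [NormedSpace 𝕜 E]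

theorem ContinuousLinearMap.norm_le_of_mul_eq_one_add {L B e : E →L[𝕜] E}
    (h : L * B = 1 + e) (he : ‖e‖ ≤ 1 / 2) (x : E) : ‖x‖ ≤ 2 * ‖L‖ * ‖B x‖ := by
  have hx : x = L (B x) - e x := eq_sub_of_add_eq (by simpa using congr($h x).symm)
  have : ‖x‖ ≤ ‖L‖ * ‖B x‖ + 1 / 2 * ‖x‖ :=
    calc ‖x‖ = ‖L (B x) - e x‖ := by rw [← hx]
      _ ≤ ‖L (B x)‖ + ‖e x‖ := norm_sub_le _ _
      _ ≤ ‖L‖ * ‖B x‖ + 1 / 2 * ‖x‖ := by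
        gcongr
        · exact L.le_opNorm _
        · exact (e.le_opNorm x).trans (by gcongr)
  linarith

theorem ContinuousLinearMap.surjective_of_mul_eq_one_add [CompleteSpace E] {B G f : E →L[𝕜] E}
    (h : B * G = 1 + f) (hf : ‖f‖ < 1) : Function.Surjective B := by
  obtain ⟨u, hu⟩ := isUnit_one_sub_of_norm_lt_one (x := -f) (by rwa [norm_neg])
  have hright : B * (G * ↑u⁻¹) = 1 := by
    rw [← mul_assoc, h, ← sub_neg_eq_add, ← hu, Units.mul_inv]
  exact fun y => ⟨(G * ↑u⁻¹) y, by simpa using congr($hright y)⟩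

theorem CollectivelyCompact.exists_eventually_bijective_one_sub [NormedAlgebra ℝ 𝕜]
    [CompleteSpace E] {a : E →L[𝕜] E} {b : ℕ → E →L[𝕜] E} (ha : IsUnit (1 - a))
    (hconv : ∀ x, Tendsto (fun m => b m x) atTop (𝓝 (a x))) (hb : CollectivelyCompact b) :
    ∃ C, 0 < C ∧ ∀ᶠ m in atTop,
      Function.Bijective ⇑(1 - b m : E →L[𝕜] E) ∧ ∀ x, ‖x‖ ≤ C * ‖(1 - b m) x‖ := by
  set S : E →L[𝕜] E := ↑ha.unit⁻¹
  have hleft : Tendsto (fun m => ‖S * ((a - b m) * b m)‖) atTop (𝓝 0) := by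
    refine squeeze_zero (fun _ => norm_nonneg _) (fun m => norm_mul_le _ _) ?_
    simpa only [mul_zero, ContinuousLinearMap.mul_def]
      using (hb.tendsto_opNorm_sub_comp hconv).const_mul ‖S‖
  have hright : Tendsto (fun m => ‖(a - b m) * (S * b m)‖) atTop (𝓝 0) :=
    (hb.comp_left S).tendsto_opNorm_sub_comp hconv
  obtain ⟨M, hM⟩ := ContinuousLinearMap.exists_forall_norm_le_of_tendsto hconv
  have hM0 : 0 ≤ M := (norm_nonneg _).trans (hM 0)
  refine ⟨2 * (1 + ‖S‖ * M), by positivity, ?_⟩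
  filter_upwards [hleft.eventually (ge_mem_nhds one_half_pos),
    hright.eventually (gt_mem_nhds one_pos)] with m hlm hrm
  have hL : ‖1 + S * b m‖ ≤ 1 + ‖S‖ * M :=
    (norm_add_le _ _).trans (add_le_add ContinuousLinearMap.norm_id_le
      ((norm_mul_le _ _).trans (by gcongr; exact hM m)))
  have hbound x : ‖x‖ ≤ 2 * (1 + ‖S‖ * M) * ‖(1 - b m) x‖ :=
    (ContinuousLinearMap.norm_le_of_mul_eq_one_add
      (one_add_mul_mul_one_sub ha.val_inv_mul) hlm x).trans (by gcongr)
  refine ⟨⟨(injective_iff_map_eq_zero _).2 fun x hx =>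
      norm_le_zero_iff.1 (by simpa only [hx, norm_zero, mul_zero] using hbound x),
    ContinuousLinearMap.surjective_of_mul_eq_one_add
      (one_sub_mul_one_add_mul ha.mul_val_inv) hrm⟩, hbound⟩

end ApproximateInverse

theorem collectively_compact_inverse_uniform_bound_general
    (X : Type*) [NormedAddCommGroup X] [NormedSpace ℝ X] [CompleteSpace X]
    (T : X →L[ℝ] X)
    (Tm : ℕ → X →L[ℝ] X)
    (hconv : ∀ x : X, Tendsto (fun m => Tm m x) atTop (nhds (T x)))
    (hcc : IsCompact (closure (⋃ m : ℕ, ⇑(Tm m) '' Metric.closedBall 0 1)))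
    (lam : ℝ)
    (hbij : Function.Bijective ⇑(ContinuousLinearMap.id ℝ X - lam • T)) :
    ∃ N : ℕ, ∃ C : ℝ, 0 < C ∧ ∀ m ≥ N,
      Function.Bijective ⇑(ContinuousLinearMap.id ℝ X - lam • Tm m) ∧
      ∀ x y : X, (ContinuousLinearMap.id ℝ X - lam • Tm m) x = y → ‖x‖ ≤ C * ‖y‖ := by
  rw [← ContinuousLinearMap.one_def] at hbij ⊢
  have hb : CollectivelyCompact fun m => lam • Tm m := by
    convert CollectivelyCompact.comp_left (𝕜 := ℝ) hcc (lam • (1 : X →L[ℝ] X)) using 2 with m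
    ext; simp
  obtain ⟨C, hC, hev⟩ := hb.exists_eventually_bijective_one_sub
    (ContinuousLinearMap.isUnit_iff_bijective.2 hbij) fun x => (hconv x).const_smul lam
  obtain ⟨N, hN⟩ := eventually_atTop.1 hev
  exact ⟨N, C, hC, fun m hm => ⟨(hN m hm).1, fun x y hxy => hxy ▸ (hN m hm).2 x⟩⟩

/-- Collectively compact operator approximation: if `T` is a compact bounded linear
operator on a Banach space `X`, `(T_m)` is a pointwise convergent, collectively compact
sequence of bounded operators with limit `T`, and `I − λT` is bijective, then for all
sufficiently large `m` the operators `I − λT_m` are bijective with uniformly bounded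
inverses. -/
theorem collectively_compact_inverse_uniform_bound
    (X : Type*) [NormedAddCommGroup X] [NormedSpace ℝ X] [CompleteSpace X]
    (T : X →L[ℝ] X) (hT : IsCompact (closure (⇑T '' Metric.closedBall 0 1)))
    (Tm : ℕ → X →L[ℝ] X)
    (hconv : ∀ x : X, Tendsto (fun m => Tm m x) atTop (nhds (T x)))
    (hcc : IsCompact (closure (⋃ m : ℕ, ⇑(Tm m) '' Metric.closedBall 0 1)))
    (lam : ℝ)
    (hbij : Function.Bijective ⇑(ContinuousLinearMap.id ℝ X - lam • T)) :
    ∃ N : ℕ, ∃ C : ℝ, 0 < C ∧ ∀ m ≥ N,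
      Function.Bijective ⇑(ContinuousLinearMap.id ℝ X - lam • Tm m) ∧
      ∀ x y : X, (ContinuousLinearMap.id ℝ X - lam • Tm m) x = y → ‖x‖ ≤ C * ‖y‖ :=
  collectively_compact_inverse_uniform_bound_general X T Tm hconv hcc lam hbij
end

section
/- Let X be a real Banach space, let F, F_m, Q_n be bounded linear operators on X, let λ ∈ ℝ, and let f, u* ∈ X with u* − λ·F u* = f. Suppose I − λ·(F_m ∘ Q_n) is bijective with ‖(I − λ F_m Q_n)^{-1}‖ ≤ γ₁ and ‖F_m‖ ≤ γ₂, and set ū := (I − λ F_m Q_n)^{-1} f. Then ‖ū − u*‖ ≤ |λ| · γ₁ · ( γ₂ · ‖u* − Q_n u*‖ + ‖F u* − F_m u*‖ ). -/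
/-!
Since `u* = (I − λ F_m Q_n)⁻¹ (u* − λ F_m Q_n u*)` and `f = u* − λ F u*`, the error is
`ū − u* = λ (I − λ F_m Q_n)⁻¹ (F_m Q_n u* − F u*)`, and splitting
`F_m Q_n u* − F u* = F_m (Q_n u* − u*) + (F_m u* − F u*)` gives the bound.
-/

namespace ContinuousLinearMap

theorem apply_sub_smul_apply_sub_eq {R M : Type*} [Ring R] [TopologicalSpace M]
    [AddCommGroup M] [Module R M] {K L : M →L[R] M} {c : R}
    (hL : ∀ x, L (x - c • K x) = x) (G : M →L[R] M) (u : M) :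
    L (u - c • G u) - u = c • L (K u - G u) := by
  calc L (u - c • G u) - u = L ((u - c • G u) - (u - c • K u)) := by
        rw [map_sub _ _ (u - c • K u), hL]
    _ = c • L (K u - G u) := by rw [sub_sub_sub_cancel_left, ← smul_sub, map_smul]

theorem norm_apply_comp_sub_le {𝕜 E F : Type*} [NontriviallyNormedField 𝕜]
    [SeminormedAddCommGroup E] [NormedSpace 𝕜 E] [SeminormedAddCommGroup F] [NormedSpace 𝕜 F]
    (A B : E →L[𝕜] F) (P : E →L[𝕜] E) (u : E) :
    ‖A (P u) - B u‖ ≤ ‖A‖ * ‖u - P u‖ + ‖B u - A u‖ := by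
  calc ‖A (P u) - B u‖ = ‖A (u - P u) + (B u - A u)‖ := by
        rw [← norm_neg, map_sub]; abel_nf
    _ ≤ ‖A (u - P u)‖ + ‖B u - A u‖ := norm_add_le _ _
    _ ≤ ‖A‖ * ‖u - P u‖ + ‖B u - A u‖ := by gcongr; exact A.le_opNorm _

end ContinuousLinearMap

theorem discrete_collocation_error_bound_general
    (X : Type*) [NormedAddCommGroup X] [NormedSpace ℝ X]
    (F Fm Qn : X →L[ℝ] X) (lam γ1 γ2 : ℝ) (f ustar : X)
    (h : ustar - lam • F ustar = f)
    (inv : X →L[ℝ] X)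
    (hinv1 : ∀ x : X, inv ((ContinuousLinearMap.id ℝ X - lam • (Fm.comp Qn)) x) = x)
    (hγ1 : ‖inv‖ ≤ γ1) (hγ2 : ‖Fm‖ ≤ γ2)
    (ubar : X) (hubar : ubar = inv f) :
    ‖ubar - ustar‖ ≤ |lam| * γ1 * (γ2 * ‖ustar - Qn ustar‖ + ‖F ustar - Fm ustar‖) := by
  have hleft : ∀ x, inv (x - lam • (Fm.comp Qn) x) = x := by simpa using hinv1
  have hγ1_nonneg : 0 ≤ γ1 := (norm_nonneg inv).trans hγ1
  rw [hubar, ← h, ContinuousLinearMap.apply_sub_smul_apply_sub_eq hleft, norm_smul,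
    Real.norm_eq_abs, mul_assoc]
  gcongr
  calc ‖inv ((Fm.comp Qn) ustar - F ustar)‖
      ≤ ‖inv‖ * ‖Fm (Qn ustar) - F ustar‖ := inv.le_opNorm _
    _ ≤ γ1 * (‖Fm‖ * ‖ustar - Qn ustar‖ + ‖F ustar - Fm ustar‖) := by
      gcongr
      exact Fm.norm_apply_comp_sub_le F Qn ustar
    _ ≤ γ1 * (γ2 * ‖ustar - Qn ustar‖ + ‖F ustar - Fm ustar‖) := by gcongr

/-- Error bound for the iterated discrete collocation solution: if `u*` solves
`u* − λ·F u* = f`, the operator `I − λ·F_m Q_n` is bijective with inverse of norm at most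
`γ₁`, `‖F_m‖ ≤ γ₂`, and `ū := (I − λ F_m Q_n)⁻¹ f`, then
`‖ū − u*‖ ≤ |λ| γ₁ (γ₂‖u* − Q_n u*‖ + ‖F u* − F_m u*‖)`. -/
theorem discrete_collocation_error_bound
    (X : Type*) [NormedAddCommGroup X] [NormedSpace ℝ X]
    (F Fm Qn : X →L[ℝ] X) (lam γ1 γ2 : ℝ) (f ustar : X)
    (h : ustar - lam • F ustar = f)
    (inv : X →L[ℝ] X)
    (hinv1 : ∀ x : X, inv ((ContinuousLinearMap.id ℝ X - lam • (Fm.comp Qn)) x) = x)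
    (hinv2 : ∀ y : X, (ContinuousLinearMap.id ℝ X - lam • (Fm.comp Qn)) (inv y) = y)
    (hγ1 : ‖inv‖ ≤ γ1) (hγ2 : ‖Fm‖ ≤ γ2)
    (ubar : X) (hubar : ubar = inv f) :
    ‖ubar - ustar‖ ≤ |lam| * γ1 * (γ2 * ‖ustar - Qn ustar‖ + ‖F ustar - Fm ustar‖) :=
  discrete_collocation_error_bound_general X F Fm Qn lam γ1 γ2 f ustar h inv hinv1 hγ1 hγ2 ubar
    hubar
end

section
/- Let m ≥ 1 be an integer, σ ∈ (0, 1), and s ≥ (2m + 1)/(1 − σ). Then there exists a constant C > 0, depending only on m, σ, s, such that for every integer L ≥ 2, Σ_{q=2}^{L} ( (q/L)^s − ((q−1)/L)^s )^{2m+1} · ( ((q−1)/L)^s )^{−σ−2m} ≤ C · L^{−2m}. -/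
/-!
Write `a = h_q`, `b = h_{q-1}`. Bernoulli's inequality bounds the increment by
`a ^ s - b ^ s ≤ s a^(s-1) (a - b)`, and for `q ≥ 2` the mesh points satisfy `a ≤ 2 b`, so
`b ^ (-s t) ≤ 2 ^ (s t) a ^ (-s t)`. Hence the `q`-th term is at most `s ^ n 2 ^ (s t) L ^ (-n)`
times `a ^ (s (n - t) - n)`, which is `≤ 1` exactly when `s ≥ n / (n - t)`; here `n = 2m + 1`,
`t = σ + 2m`. Summing at most `L` such terms gives `C L ^ (-2m)`.
-/

open Real Finset

lemma rpow_sub_rpow_le_mul_sub {a b s : ℝ} (ha : 0 < a) (hb : 0 ≤ b) (hs : 1 ≤ s) :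
    a ^ s - b ^ s ≤ s * a ^ (s - 1) * (a - b) := by
  have bernoulli : 1 + s * (b / a - 1) ≤ (b / a) ^ s := by
    simpa using one_add_mul_self_le_rpow_one_add (s := b / a - 1)
      (by linarith [div_nonneg hb ha.le]) hs
  rw [div_rpow hb ha.le, le_div_iff₀ (rpow_pos_of_pos ha s)] at bernoulli
  have : (1 + s * (b / a - 1)) * a ^ s = a ^ s - s * a ^ (s - 1) * (a - b) := by
    rw [rpow_sub_one ha.ne']; field_simp; ring
  linarith

lemma rpow_sub_rpow_pow_mul_rpow_le {a b s t : ℝ} {n : ℕ} (hb : 0 < b) (hba : b ≤ a)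
    (hab : a ≤ 2 * b) (ha : a ≤ 1) (hs : 1 ≤ s) (ht : 0 ≤ t) (hst : n ≤ s * (n - t)) :
    (a ^ s - b ^ s) ^ n * (b ^ s) ^ (-t) ≤ s ^ n * 2 ^ (s * t) * (a - b) ^ n := by
  have ha0 : 0 < a := hb.trans_le hba
  have hdiff : (a ^ s - b ^ s) ^ n ≤ (s * a ^ (s - 1) * (a - b)) ^ n :=
    pow_le_pow_left₀ (by linarith [rpow_le_rpow hb.le hba (by linarith : 0 ≤ s)])
      (rpow_sub_rpow_le_mul_sub ha0 hb.le hs) n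
  have hweight : (b ^ s) ^ (-t) ≤ 2 ^ (s * t) * a ^ (-(s * t)) := by
    calc (b ^ s) ^ (-t) = b ^ (-(s * t)) := by rw [← rpow_mul hb.le]; ring_nf
      _ ≤ (a / 2) ^ (-(s * t)) :=
          rpow_le_rpow_of_nonpos (by positivity) (by linarith) (by nlinarith)
      _ = 2 ^ (s * t) * a ^ (-(s * t)) := by
          rw [div_rpow ha0.le (by norm_num), rpow_neg (by norm_num : (0:ℝ) ≤ 2), div_inv_eq_mul,
            mul_comm]
  have hpow : (a ^ (s - 1)) ^ n * a ^ (-(s * t)) ≤ 1 := by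
    rw [← rpow_natCast, ← rpow_mul ha0.le, ← rpow_add ha0]
    exact rpow_le_one ha0.le ha (by nlinarith)
  calc (a ^ s - b ^ s) ^ n * (b ^ s) ^ (-t)
      ≤ (s * a ^ (s - 1) * (a - b)) ^ n * (2 ^ (s * t) * a ^ (-(s * t))) :=
        mul_le_mul hdiff hweight (by positivity) (by positivity)
    _ = s ^ n * 2 ^ (s * t) * (a - b) ^ n * ((a ^ (s - 1)) ^ n * a ^ (-(s * t))) := by
        rw [mul_pow, mul_pow]; ring
    _ ≤ s ^ n * 2 ^ (s * t) * (a - b) ^ n :=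
        mul_le_of_le_one_right (by have := sub_nonneg.2 hba; positivity) hpow

lemma graded_mesh_term_le {L q : ℕ} (hq : 2 ≤ q) (hqL : q ≤ L) {s t : ℝ} {n : ℕ} (hs : 1 ≤ s)
    (ht : 0 ≤ t) (hst : n ≤ s * (n - t)) :
    (((q : ℝ) / L) ^ s - (((q : ℝ) - 1) / L) ^ s) ^ n * ((((q : ℝ) - 1) / L) ^ s) ^ (-t) ≤
      s ^ n * 2 ^ (s * t) * (1 / (L : ℝ)) ^ n := by
  have hL : (0 : ℝ) < L := by norm_cast; omega
  have h2q : (2 : ℝ) ≤ q := by exact_mod_cast hq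
  have hstep : (q : ℝ) / L - (q - 1) / L = 1 / L := by field_simp; ring
  rw [← hstep]
  refine rpow_sub_rpow_pow_mul_rpow_le (div_pos (by linarith) hL) ?_ ?_
    ((div_le_one hL).2 (by exact_mod_cast hqL)) hs ht hst
  · gcongr; linarith
  · rw [← mul_div_assoc, div_le_div_iff_of_pos_right hL]; linarith

theorem graded_mesh_sum_bound_general (m : ℕ) (σ : ℝ) (hσ : σ ∈ Set.Ioo (0 : ℝ) 1)
    (s : ℝ) (hs : (2 * m + 1) / (1 - σ) ≤ s) :
    ∃ C : ℝ, 0 < C ∧ ∀ L : ℕ, 2 ≤ L →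
      ∑ q ∈ Finset.Icc 2 L,
          ((((q : ℝ) / L) ^ s - (((q : ℝ) - 1) / L) ^ s) ^ (2 * m + 1) *
            ((((q : ℝ) - 1) / L) ^ s) ^ (-σ - 2 * m)) ≤
        C * (L : ℝ) ^ (-(2 * (m : ℝ))) := by
  obtain ⟨hσ0, hσ1⟩ := hσ
  rw [div_le_iff₀ (by linarith)] at hs
  have hs1 : 1 ≤ s := by nlinarith
  have hst : ((2 * m + 1 : ℕ) : ℝ) ≤ s * ((2 * m + 1 : ℕ) - (σ + 2 * m)) := by
    push_cast; linarith
  set C : ℝ := s ^ (2 * m + 1) * 2 ^ (s * (σ + 2 * m))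
  refine ⟨C, by positivity, fun L hL => ?_⟩
  have hL0 : (0 : ℝ) < L := by positivity
  calc _ ≤ (Icc 2 L).card • (C * (1 / (L : ℝ)) ^ (2 * m + 1)) := by
        refine sum_le_card_nsmul _ _ _ fun q hq => ?_
        rw [mem_Icc] at hq; rw [← neg_add']
        exact graded_mesh_term_le hq.1 hq.2 hs1 (by positivity) hst
    _ ≤ L * (C * (1 / (L : ℝ)) ^ (2 * m + 1)) := by
        rw [nsmul_eq_mul, Nat.card_Icc]
        gcongr
        exact_mod_cast (by omega : L + 1 - 2 ≤ L)
    _ = C * (L : ℝ) ^ (-(2 * (m : ℝ))) := by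
        rw [rpow_neg hL0.le, show 2 * (m : ℝ) = (2 * m : ℕ) by push_cast; rfl, rpow_natCast,
          one_div_pow]
        field_simp
        ring

/-- Graded-mesh estimate: for `m ≥ 1`, `σ ∈ (0,1)` and `s ≥ (2m+1)/(1−σ)` there is a
constant `C > 0` such that for every integer `L ≥ 2`,
`Σ_{q=2}^{L} ((q/L)^s − ((q−1)/L)^s)^{2m+1} (((q−1)/L)^s)^{−σ−2m} ≤ C · L^{−2m}`. -/
theorem graded_mesh_sum_bound (m : ℕ) (hm : 1 ≤ m) (σ : ℝ) (hσ : σ ∈ Set.Ioo (0 : ℝ) 1)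
    (s : ℝ) (hs : (2 * m + 1) / (1 - σ) ≤ s) :
    ∃ C : ℝ, 0 < C ∧ ∀ L : ℕ, 2 ≤ L →
      ∑ q ∈ Finset.Icc 2 L,
          ((((q : ℝ) / L) ^ s - (((q : ℝ) - 1) / L) ^ s) ^ (2 * m + 1) *
            ((((q : ℝ) - 1) / L) ^ s) ^ (-σ - 2 * m)) ≤
        C * (L : ℝ) ^ (-(2 * (m : ℝ))) :=
  graded_mesh_sum_bound_general m σ hσ s hs
end

section
/- Let m ≥ 1 be an integer and σ ∈ (0, 1). Let θ_1, …, θ_m ∈ (−1, 1) and w_1, …, w_m > 0 be nodes and weights of a quadrature rule on [−1,1] that is exact on polynomials of degree at most 2m − 1. Let g : (0, 1] → ℝ be 2m times continuously differentiable on (0,1], and suppose there is C > 0 with |g(y)| ≤ C·y^{−σ} and |g^{(2m)}(y)| ≤ C·y^{−σ−2m} for all y ∈ (0,1]. Set s := (2m+1)/(1−σ) and, for an integer L ≥ 1, h_q := (q/L)^s, Δh_q := h_q − h_{q−1}, and θ_k^q := (Δh_q/2)·θ_k + (h_q + h_{q−1})/2. Then there exists a constant C′ > 0, depending only on m, σ,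 C and the quadrature rule (not on L), such that for every L ≥ 1: | ∫_0^1 g(y) dy − Σ_{q=1}^{L} Σ_{k=1}^{m} w_k · (Δh_q/2) · g(θ_k^q) | ≤ C′ · L^{−2m}. -/
/-!
On a cell `[a, b] ⊆ (0, 1]` the rule is exact on the Taylor polynomial of `g` of degree `2m - 1`
at `a`, so its error is at most `2 sup |g⁽²ᵐ⁾| (b - a)^(2m+1) / (2m - 1)!`, which is
`O(a^(-σ-2m) (b - a)^(2m+1))`. On the graded cells `a = h_{q-1} ≥ 2^(-s) h_q` and, by Bernoulli's
inequality, `b - a ≤ s h_q / q`; the choice `s (1 - σ) = 2m + 1` makes all powers of `q` cancel,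
leaving `O(L^(-2m-1))` for every `q ≥ 2`. On the first cell `[0, h_1]` the integral and the rule
are bounded separately by the singular bound `C y^(-σ)`, each by `O(h_1^(1-σ)) = O(L^(-2m-1))`.
Summing over the `L` cells gives `O(L^(-2m))`.
-/

open Set MeasureTheory Polynomial
open scoped Nat

def IsExactOfDegree {ι : Type*} [Fintype ι] (θ w : ι → ℝ) (d : ℕ) : Prop :=
  ∀ p : ℝ[X], p.natDegree ≤ d → ∑ k, w k * p.eval (θ k) = ∫ t in (-1 : ℝ)..1, p.eval t

noncomputable def scaledRule {ι : Type*} [Fintype ι] (θ w : ι → ℝ) (f : ℝ → ℝ) (a b : ℝ) : ℝ :=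
  ∑ k, w k * ((b - a) / 2) * f ((b - a) / 2 * θ k + (b + a) / 2)

theorem exists_natDegree_le_abs_sub_eval_le {f : ℝ → ℝ} {a b M : ℝ} {n : ℕ} (hab : a ≤ b)
    (hf : ContDiffOn ℝ (n + 1) f (Icc a b))
    (hM : ∀ y ∈ Icc a b, ‖iteratedDerivWithin (n + 1) f (Icc a b) y‖ ≤ M) :
    ∃ p : ℝ[X], p.natDegree ≤ n ∧
      ∀ x ∈ Icc a b, |f x - p.eval x| ≤ M * (b - a) ^ (n + 1) / n ! := by
  refine ⟨∑ i ∈ Finset.range (n + 1),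
    C ((i ! : ℝ)⁻¹ * iteratedDerivWithin i f (Icc a b) a) * (X - C a) ^ i, ?_, fun x hx => ?_⟩
  · refine natDegree_sum_le_of_forall_le _ _ fun i hi => ?_
    refine (natDegree_C_mul_le _ _).trans ?_
    rw [natDegree_pow, natDegree_X_sub_C, mul_one]
    exact Nat.lt_succ_iff.mp (Finset.mem_range.mp hi)
  · have htaylor : (∑ i ∈ Finset.range (n + 1),
        C ((i ! : ℝ)⁻¹ * iteratedDerivWithin i f (Icc a b) a) * (X - C a) ^ i).eval x =
        taylorWithinEval f n (Icc a b) a x := by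
      simp only [taylor_within_apply, eval_finsetSum, eval_mul, eval_C, eval_pow, eval_sub,
        eval_X, smul_eq_mul]
      exact Finset.sum_congr rfl fun i _ => by ring
    rw [htaylor, ← Real.norm_eq_abs]
    refine (taylor_mean_remainder_bound hab hf hx hM).trans ?_
    have hM0 : 0 ≤ M := (norm_nonneg _).trans (hM x hx)
    gcongr
    · linarith [hx.1]
    · exact hx.2

theorem iteratedDerivWithin_eq_of_subset {f : ℝ → ℝ} {s t : Set ℝ} {n : ℕ} {x : ℝ} (hst : s ⊆ t)
    (hs : UniqueDiffOn ℝ s) (ht : UniqueDiffOn ℝ t) (hf : ContDiffOn ℝ n f t) (hx : x ∈ s) :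
    iteratedDerivWithin n f s x = iteratedDerivWithin n f t x := by
  simp only [iteratedDerivWithin_eq_iteratedFDerivWithin,
    iteratedFDerivWithin_subset hst hs ht hf hx]

section Quadrature

variable {ι : Type*} [Fintype ι] {θ w : ι → ℝ} {d : ℕ} {f : ℝ → ℝ} {a b : ℝ}

theorem IsExactOfDegree.sum_weights (h : IsExactOfDegree θ w d) : ∑ k, w k = 2 := by
  simpa [one_add_one_eq_two] using h 1 (by simp)

theorem IsExactOfDegree.scaledRule_eval (h : IsExactOfDegree θ w d) {p : ℝ[X]}
    (hp : p.natDegree ≤ d) (a b : ℝ) :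
    scaledRule θ w (fun x => p.eval x) a b = ∫ x in a..b, p.eval x := by
  rcases eq_or_ne a b with rfl | hab
  · simp [scaledRule]
  set β := (b - a) / 2
  have hβ : β ≠ 0 := by simp [β, sub_eq_zero, hab.symm]
  have hexact := h (p.comp (C β * X + C ((b + a) / 2)))
    (by rwa [natDegree_comp, natDegree_linear hβ, mul_one])
  simp only [eval_comp, eval_add, eval_mul, eval_C, eval_X] at hexact
  rw [intervalIntegral.integral_comp_mul_add (fun x => p.eval x) hβ,
    show β * -1 + (b + a) / 2 = a by ring, show β * 1 + (b + a) / 2 = b by ring,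
    smul_eq_mul] at hexact
  rw [scaledRule, ← mul_inv_cancel_left₀ hβ (∫ x in a..b, p.eval x), ← hexact, Finset.mul_sum]
  exact Finset.sum_congr rfl fun k _ => by ring

theorem scaledRule_sub (g : ℝ → ℝ) :
    scaledRule θ w (fun x => f x - g x) a b = scaledRule θ w f a b - scaledRule θ w g a b := by
  simp only [scaledRule, ← Finset.sum_sub_distrib, mul_sub]

theorem abs_scaledRule_le (hw : ∀ k, 0 ≤ w k) (hθ : ∀ k, θ k ∈ Icc (-1) 1) (hab : a ≤ b)
    {ε : ℝ} (hf : ∀ x ∈ Icc a b, |f x| ≤ ε) :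
    |scaledRule θ w f a b| ≤ (∑ k, w k) * ((b - a) / 2) * ε := by
  rw [Finset.sum_mul, Finset.sum_mul]
  refine (Finset.abs_sum_le_sum_abs _ _).trans (Finset.sum_le_sum fun k _ => ?_)
  rw [abs_mul, abs_mul, abs_of_nonneg (hw k), abs_of_nonneg (by linarith)]
  have hnode : (b - a) / 2 * θ k + (b + a) / 2 ∈ Icc a b := by
    obtain ⟨h₁, h₂⟩ := hθ k
    constructor <;> nlinarith
  have := hw k
  gcongr
  exact hf _ hnode

theorem IsExactOfDegree.abs_integral_sub_scaledRule_le (h : IsExactOfDegree θ w d)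
    (hw : ∀ k, 0 ≤ w k) (hθ : ∀ k, θ k ∈ Icc (-1) 1) (hab : a ≤ b)
    (hf : IntervalIntegrable f volume a b) {p : ℝ[X]} (hp : p.natDegree ≤ d) {ε : ℝ}
    (hfp : ∀ x ∈ Icc a b, |f x - p.eval x| ≤ ε) :
    |(∫ x in a..b, f x) - scaledRule θ w f a b| ≤ 2 * ε * (b - a) := by
  have hp_int : IntervalIntegrable (fun x => p.eval x) volume a b :=
    p.continuous.intervalIntegrable a b
  have herr : (∫ x in a..b, f x) - scaledRule θ w f a b =
      (∫ x in a..b, f x - p.eval x) - scaledRule θ w (fun x => f x - p.eval x) a b := by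
    rw [intervalIntegral.integral_sub hf hp_int, scaledRule_sub, h.scaledRule_eval hp]
    ring
  have hint : |∫ x in a..b, f x - p.eval x| ≤ ε * (b - a) := by
    simpa [abs_of_nonneg (sub_nonneg.2 hab)] using
      intervalIntegral.norm_integral_le_of_norm_le_const (a := a) (b := b)
        (f := fun x => f x - p.eval x) fun x hx => by
          rw [uIoc_of_le hab] at hx
          exact hfp x (Ioc_subset_Icc_self hx)
  have hrule := abs_scaledRule_le hw hθ hab hfp
  rw [h.sum_weights] at hrule
  rw [herr]
  refine (abs_sub _ _).trans ?_
  linarith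

theorem IsExactOfDegree.abs_integral_sub_scaledRule_le_of_iteratedDerivWithin_le
    {n : ℕ} {M : ℝ} {s : Set ℝ} (h : IsExactOfDegree θ w n) (hw : ∀ k, 0 ≤ w k)
    (hθ : ∀ k, θ k ∈ Icc (-1) 1) (hab : a < b) (habs : Icc a b ⊆ s) (hs : UniqueDiffOn ℝ s)
    (hf : ContDiffOn ℝ (n + 1) f s)
    (hM : ∀ y ∈ Icc a b, |iteratedDerivWithin (n + 1) f s y| ≤ M) :
    |(∫ x in a..b, f x) - scaledRule θ w f a b| ≤ 2 * M * (b - a) ^ (n + 2) / n ! := by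
  have hf' : ContDiffOn ℝ (n + 1) f (Icc a b) := hf.mono habs
  obtain ⟨p, hp, hfp⟩ := exists_natDegree_le_abs_sub_eval_le hab.le hf' fun y hy => by
    rw [iteratedDerivWithin_eq_of_subset habs (uniqueDiffOn_Icc hab) hs (mod_cast hf) hy]
    exact hM y hy
  have hint : IntervalIntegrable f volume a b :=
    (hf'.continuousOn.mono (uIcc_of_le hab.le).subset).intervalIntegrable
  refine (h.abs_integral_sub_scaledRule_le hw hθ hab.le hint hp hfp).trans (le_of_eq ?_)
  ring

end Quadrature

section Singular

variable {ι : Type*} [Fintype ι] {θ w : ι → ℝ} {f : ℝ → ℝ} {c σ : ℝ}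

theorem intervalIntegrable_of_abs_le_rpow {u v : ℝ} (hσ : σ < 1) (huv : u ≤ v)
    (hf : ContinuousOn f (Ioc u v)) (hb : ∀ y ∈ Ioc u v, |f y| ≤ c * y ^ (-σ)) :
    IntervalIntegrable f volume u v := by
  have hbound := (intervalIntegral.intervalIntegrable_rpow' (a := u) (b := v)
    (by linarith : -1 < -σ)).const_mul c
  rw [intervalIntegrable_iff_integrableOn_Ioc_of_le huv] at hbound ⊢
  refine hbound.mono' (hf.aestronglyMeasurable measurableSet_Ioc) ?_
  filter_upwards [ae_restrict_mem measurableSet_Ioc] with y hy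
  exact hb y hy

theorem abs_integral_le_of_abs_le_rpow {h : ℝ} (hσ : σ < 1) (hh : 0 ≤ h)
    (hf : ∀ y ∈ Ioc 0 h, |f y| ≤ c * y ^ (-σ)) :
    |∫ y in (0 : ℝ)..h, f y| ≤ c * h ^ (1 - σ) / (1 - σ) := by
  have hbound := (intervalIntegral.intervalIntegrable_rpow' (a := 0) (b := h)
    (by linarith : -1 < -σ)).const_mul c
  have := intervalIntegral.norm_integral_le_of_norm_le (f := f) hh
    (Filter.Eventually.of_forall fun y hy => hf y hy) hbound
  rw [intervalIntegral.integral_const_mul, integral_rpow (Or.inl (by linarith)),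
    Real.zero_rpow (by linarith), show -σ + 1 = 1 - σ by ring] at this
  simpa [mul_div_assoc] using this

theorem abs_scaledRule_zero_le_of_abs_le_rpow {h : ℝ} (hw : ∀ k, 0 ≤ w k)
    (hθ : ∀ k, θ k ∈ Ioc (-1) 1) (hh : 0 < h) (hf : ∀ y ∈ Ioc 0 h, |f y| ≤ c * y ^ (-σ)) :
    |scaledRule θ w f 0 h| ≤ c * (∑ k, w k * (1 + θ k) ^ (-σ)) * (h / 2) ^ (1 - σ) := by
  rw [Finset.mul_sum, Finset.sum_mul]
  refine (Finset.abs_sum_le_sum_abs _ _).trans (Finset.sum_le_sum fun k _ => ?_)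
  obtain ⟨hθ₁, hθ₂⟩ := hθ k
  have hnode : (h - 0) / 2 * θ k + (h + 0) / 2 = h / 2 * (1 + θ k) := by ring
  have hbound := hf (h / 2 * (1 + θ k)) ⟨mul_pos (by positivity) (by linarith), by nlinarith⟩
  rw [Real.mul_rpow (by positivity) (by linarith)] at hbound
  have hpow : h / 2 * (h / 2) ^ (-σ) = (h / 2) ^ (1 - σ) := by
    rw [sub_eq_add_neg, Real.rpow_add (by positivity), Real.rpow_one]
  rw [hnode, abs_mul, abs_mul, sub_zero, abs_of_nonneg (hw k), abs_of_nonneg (by linarith), ← hpow]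
  have := hw k
  calc w k * (h / 2) * |f (h / 2 * (1 + θ k))|
      ≤ w k * (h / 2) * (c * ((h / 2) ^ (-σ) * (1 + θ k) ^ (-σ))) := by gcongr
    _ = c * (w k * (1 + θ k) ^ (-σ)) * (h / 2 * (h / 2) ^ (-σ)) := by ring

theorem sum_mul_one_add_rpow_nonneg (hw : ∀ k, 0 ≤ w k) (hθ : ∀ k, θ k ∈ Ioc (-1) 1) :
    0 ≤ ∑ k, w k * (1 + θ k) ^ (-σ) :=
  Finset.sum_nonneg fun k _ => mul_nonneg (hw k) (Real.rpow_nonneg (by linarith [(hθ k).1]) _)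

theorem abs_integral_sub_scaledRule_le_of_abs_le_rpow {h : ℝ} (hw : ∀ k, 0 ≤ w k)
    (hθ : ∀ k, θ k ∈ Ioc (-1) 1) (hc : 0 ≤ c) (hσ : σ < 1) (hh : 0 < h)
    (hf : ∀ y ∈ Ioc 0 h, |f y| ≤ c * y ^ (-σ)) :
    |(∫ y in (0 : ℝ)..h, f y) - scaledRule θ w f 0 h| ≤
      c * (1 / (1 - σ) + ∑ k, w k * (1 + θ k) ^ (-σ)) * h ^ (1 - σ) := by
  have hint := abs_integral_le_of_abs_le_rpow hσ hh.le hf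
  have hrule := abs_scaledRule_zero_le_of_abs_le_rpow hw hθ hh hf
  have hA := sum_mul_one_add_rpow_nonneg (σ := σ) hw hθ
  have hhalf : (h / 2) ^ (1 - σ) ≤ h ^ (1 - σ) :=
    Real.rpow_le_rpow (by positivity) (by linarith) (by linarith)
  have hrule' := hrule.trans (mul_le_mul_of_nonneg_left hhalf (mul_nonneg hc hA))
  calc _ ≤ |∫ y in (0 : ℝ)..h, f y| + |scaledRule θ w f 0 h| := abs_sub _ _
    _ ≤ c * h ^ (1 - σ) / (1 - σ) + c * (∑ k, w k * (1 + θ k) ^ (-σ)) * h ^ (1 - σ) := by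
      linarith
    _ = _ := by field_simp

end Singular

theorem rpow_sub_rpow_sub_le {s y δ : ℝ} (hs : 1 ≤ s) (hy : 0 < y) (hδ : δ ≤ y) :
    y ^ s - (y - δ) ^ s ≤ s * δ * y ^ (s - 1) := by
  have hδy : δ / y ≤ 1 := (div_le_one hy).2 hδ
  have hbernoulli := one_add_mul_self_le_rpow_one_add (by linarith : -1 ≤ -(δ / y)) hs
  have hfactor : (y - δ) ^ s = y ^ s * (1 + -(δ / y)) ^ s := by
    rw [← Real.mul_rpow hy.le (by linarith)]
    congr 1
    field_simp
    ring
  have hys := Real.rpow_pos_of_pos hy s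
  have hexpand : y ^ s * (1 + s * -(δ / y)) = y ^ s - s * δ * (y ^ s / y) := by
    field_simp
    ring
  rw [hfactor, Real.rpow_sub_one hy.ne']
  nlinarith

theorem integral_eq_sum_Icc_integral {f : ℝ → ℝ} (mesh : ℝ → ℝ) (L : ℕ)
    (hf : ∀ q ∈ Finset.Icc 1 L, IntervalIntegrable f volume (mesh (q - 1)) (mesh q)) :
    ∫ x in mesh 0..mesh L, f x = ∑ q ∈ Finset.Icc 1 L, ∫ x in mesh (q - 1)..mesh q, f x := by
  have hsum := intervalIntegral.sum_integral_adjacent_intervals (f := f) (a := fun k : ℕ => mesh k)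
    (n := L) fun k hk => by simpa using hf (k + 1) (Finset.mem_Icc.2 ⟨by omega, hk⟩)
  rw [Nat.cast_zero] at hsum
  rw [← hsum, Finset.range_eq_Ico, ← Finset.sum_Ico_add_right_sub_eq (c := 1), zero_add,
    Finset.Ico_add_one_right_eq_Icc]
  refine Finset.sum_congr rfl fun q hq => ?_
  simp [Nat.cast_sub (Finset.mem_Icc.1 hq).1]

-- The argument is real, so that `h_{q-1}` is `gradedMesh s L (q - 1)` with real subtraction.
noncomputable def gradedMesh (s : ℝ) (L : ℕ) (t : ℝ) : ℝ := (t / L) ^ s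

section GradedMesh

variable {s : ℝ} {L : ℕ}

theorem gradedMesh_zero (hs : s ≠ 0) : gradedMesh s L 0 = 0 := by
  simp [gradedMesh, Real.zero_rpow hs]

theorem gradedMesh_self (hL : L ≠ 0) : gradedMesh s L L = 1 := by
  simp [gradedMesh, hL]

theorem gradedMesh_mem_Icc (hs : 0 ≤ s) {t : ℝ} (ht₀ : 0 ≤ t) (htL : t ≤ L) :
    gradedMesh s L t ∈ Icc 0 1 :=
  ⟨Real.rpow_nonneg (by positivity) s, Real.rpow_le_one (by positivity) (div_le_one_of_le₀ htL
    (Nat.cast_nonneg L)) hs⟩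

theorem gradedMesh_strictMonoOn (hs : 0 < s) (hL : L ≠ 0) : StrictMonoOn (gradedMesh s L) (Ici 0) :=
  fun x hx y _ hxy => Real.rpow_lt_rpow (div_nonneg hx (Nat.cast_nonneg L))
    (div_lt_div_of_pos_right hxy (by positivity)) hs

theorem gradedMesh_rpow_neg_mul_sub_pow_le {β x : ℝ} {n : ℕ} (hs : 1 ≤ s) (hβ : 0 ≤ β)
    (hL : L ≠ 0) (hx : 2 ≤ x) (hsn : s * (n - β) = n) :
    gradedMesh s L (x - 1) ^ (-β) * (gradedMesh s L x - gradedMesh s L (x - 1)) ^ n ≤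
      2 ^ (s * β) * s ^ n / L ^ n := by
  set l : ℝ := (L : ℝ)
  have hl : 0 < l := by positivity
  simp only [gradedMesh]
  set y := x / l
  have hy : 0 < y := by positivity
  have hprev : (x - 1) / l = y - 1 / l := by simp only [y]; ring
  have hprev_ge : (y / 2) ^ s ≤ ((x - 1) / l) ^ s := by
    refine Real.rpow_le_rpow (by positivity) ?_ (by linarith)
    simp only [y]
    rw [div_div, div_le_div_iff₀ (by positivity) hl]
    nlinarith
  have hstep_nonneg : 0 ≤ y ^ s - ((x - 1) / l) ^ s := by
    refine sub_nonneg.2 (Real.rpow_le_rpow (div_nonneg (by linarith) hl.le) ?_ (by linarith))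
    exact div_le_div_of_nonneg_right (by linarith) hl.le
  have hstep_le : y ^ s - ((x - 1) / l) ^ s ≤ s * (1 / l) * y ^ (s - 1) := by
    rw [hprev]
    refine rpow_sub_rpow_sub_le hs hy ?_
    simp only [y]
    gcongr
    linarith
  have hexp : -(s * β) + (s - 1) * n = 0 := by linear_combination hsn
  calc (((x - 1) / l) ^ s) ^ (-β) * (y ^ s - ((x - 1) / l) ^ s) ^ n
      ≤ ((y / 2) ^ s) ^ (-β) * (s * (1 / l) * y ^ (s - 1)) ^ n := by
        refine mul_le_mul ?_ (pow_le_pow_left₀ hstep_nonneg hstep_le n)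
          (pow_nonneg hstep_nonneg n) (by positivity)
        exact Real.rpow_le_rpow_of_nonpos (by positivity) hprev_ge (by linarith)
    _ = 2 ^ (s * β) * s ^ n / l ^ n * (y ^ (-(s * β)) * y ^ ((s - 1) * n)) := by
        rw [← Real.rpow_mul (by positivity), Real.div_rpow hy.le (by norm_num), mul_pow, mul_pow,
          ← Real.rpow_natCast (y ^ (s - 1)), ← Real.rpow_mul hy.le, mul_neg, Real.rpow_neg hy.le,
          Real.rpow_neg (by norm_num), one_div_pow]
        field_simp
    _ = 2 ^ (s * β) * s ^ n / l ^ n := by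
        rw [← Real.rpow_add hy, hexp, Real.rpow_zero, mul_one]

end GradedMesh

section GradedComposite

variable {ι : Type*} [Fintype ι] {θ w : ι → ℝ} {n : ℕ} {σ s C : ℝ} {g : ℝ → ℝ} {L : ℕ}

theorem abs_integral_sub_scaledRule_gradedMesh_one_le (hw : ∀ k, 0 ≤ w k)
    (hθ : ∀ k, θ k ∈ Ioc (-1) 1) (hC : 0 ≤ C) (hσ : σ < 1) (hs : 0 < s)
    (hsn : s * (1 - σ) = n) (hL : L ≠ 0) (hgb : ∀ y ∈ Ioc (0 : ℝ) 1, |g y| ≤ C * y ^ (-σ)) :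
    |(∫ y in gradedMesh s L 0..gradedMesh s L 1, g y) -
        scaledRule θ w g (gradedMesh s L 0) (gradedMesh s L 1)| ≤
      C * (1 / (1 - σ) + ∑ k, w k * (1 + θ k) ^ (-σ)) / L ^ n := by
  have hpos : 0 < gradedMesh s L 1 := Real.rpow_pos_of_pos (by positivity) s
  have hle : gradedMesh s L 1 ≤ 1 :=
    (gradedMesh_mem_Icc hs.le zero_le_one (Nat.one_le_cast.2 (Nat.one_le_iff_ne_zero.2 hL))).2
  rw [gradedMesh_zero hs.ne']
  refine (abs_integral_sub_scaledRule_le_of_abs_le_rpow hw hθ hC hσ hpos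
    fun y hy => hgb y ⟨hy.1, hy.2.trans hle⟩).trans (le_of_eq ?_)
  rw [gradedMesh, ← Real.rpow_mul (by positivity), hsn, Real.rpow_natCast, div_pow, one_pow]
  ring

theorem abs_integral_sub_scaledRule_gradedMesh_le_of_two_le (hexact : IsExactOfDegree θ w n)
    (hw : ∀ k, 0 ≤ w k) (hθ : ∀ k, θ k ∈ Icc (-1) 1) (hσ : 0 ≤ σ) (hs : 1 ≤ s)
    (hsn : s * (1 - σ) = n + 2) (hg : ContDiffOn ℝ (n + 1) g (Ioc 0 1))
    (hgd : ∀ y ∈ Ioc (0 : ℝ) 1,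
      |iteratedDerivWithin (n + 1) g (Ioc 0 1) y| ≤ C * y ^ (-σ - (n + 1)))
    {q : ℕ} (hq : 2 ≤ q) (hqL : q ≤ L) :
    |(∫ y in gradedMesh s L (q - 1)..gradedMesh s L q, g y) -
        scaledRule θ w g (gradedMesh s L (q - 1)) (gradedMesh s L q)| ≤
      2 * C * 2 ^ (s * (σ + (n + 1))) * s ^ (n + 2) / n ! / L ^ (n + 2) := by
  have hL : L ≠ 0 := by omega
  have hq' : (2 : ℝ) ≤ q := by exact_mod_cast hq
  have hmono := gradedMesh_strictMonoOn (by linarith : 0 < s) hL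
  set a := gradedMesh s L (q - 1)
  set b := gradedMesh s L q
  have ha : 0 < a := by
    rw [← gradedMesh_zero (s := s) (L := L) (by linarith)]
    exact hmono (mem_Ici.2 le_rfl) (by simp only [mem_Ici]; linarith) (by linarith)
  have hab : a < b := hmono (by simp only [mem_Ici]; linarith) (by simp) (by linarith)
  have hb : b ≤ 1 := (gradedMesh_mem_Icc (by linarith) (by linarith) (by exact_mod_cast hqL)).2
  have hsub : Icc a b ⊆ Ioc 0 1 := Icc_subset_Ioc ha hb
  have hC : 0 ≤ C := by simpa using (abs_nonneg _).trans (hgd 1 (right_mem_Ioc.2 one_pos))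
  have hlocal := hexact.abs_integral_sub_scaledRule_le_of_iteratedDerivWithin_le hw hθ hab hsub
    (uniqueDiffOn_Ioc 0 1) hg (M := C * a ^ (-σ - (n + 1))) fun y hy => by
      refine (hgd y (hsub hy)).trans (mul_le_mul_of_nonneg_left ?_ hC)
      exact Real.rpow_le_rpow_of_nonpos ha hy.1 (by linarith)
  have hstep := gradedMesh_rpow_neg_mul_sub_pow_le (n := n + 2) (β := σ + (n + 1)) hs
    (by positivity) hL hq' (by push_cast; linear_combination hsn)
  refine hlocal.trans ?_
  calc 2 * (C * a ^ (-σ - (n + 1))) * (b - a) ^ (n + 2) / n !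
      = 2 * C / n ! * (a ^ (-(σ + (n + 1))) * (b - a) ^ (n + 2)) := by ring_nf
    _ ≤ 2 * C / n ! * (2 ^ (s * (σ + (n + 1))) * s ^ (n + 2) / L ^ (n + 2)) := by gcongr
    _ = _ := by ring

noncomputable def gradedQuadratureConst (θ w : ι → ℝ) (n : ℕ) (σ s C : ℝ) : ℝ :=
  C * (1 / (1 - σ) + ∑ k, w k * (1 + θ k) ^ (-σ)) +
    2 * C * 2 ^ (s * (σ + (n + 1))) * s ^ (n + 2) / n !

theorem gradedQuadratureConst_pos (hw : ∀ k, 0 ≤ w k) (hθ : ∀ k, θ k ∈ Ioc (-1) 1)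
    (hσ : σ < 1) (hs : 0 ≤ s) (hC : 0 < C) : 0 < gradedQuadratureConst θ w n σ s C := by
  have hK₁ : 0 < C * (1 / (1 - σ) + ∑ k, w k * (1 + θ k) ^ (-σ)) :=
    mul_pos hC (add_pos_of_pos_of_nonneg (by simp; linarith) (sum_mul_one_add_rpow_nonneg hw hθ))
  exact add_pos_of_pos_of_nonneg hK₁ (by positivity)

theorem abs_integral_sub_scaledRule_gradedMesh_le_gradedQuadratureConst
    (hexact : IsExactOfDegree θ w n) (hw : ∀ k, 0 ≤ w k) (hθ : ∀ k, θ k ∈ Ioc (-1) 1)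
    (hσ₀ : 0 ≤ σ) (hσ₁ : σ < 1) (hs : 1 ≤ s) (hsn : s * (1 - σ) = n + 2) (hC : 0 ≤ C)
    (hg : ContDiffOn ℝ (n + 1) g (Ioc 0 1)) (hgb : ∀ y ∈ Ioc (0 : ℝ) 1, |g y| ≤ C * y ^ (-σ))
    (hgd : ∀ y ∈ Ioc (0 : ℝ) 1,
      |iteratedDerivWithin (n + 1) g (Ioc 0 1) y| ≤ C * y ^ (-σ - (n + 1)))
    {q : ℕ} (hq : q ∈ Finset.Icc 1 L) :
    |(∫ y in gradedMesh s L (q - 1)..gradedMesh s L q, g y) -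
        scaledRule θ w g (gradedMesh s L (q - 1)) (gradedMesh s L q)| ≤
      gradedQuadratureConst θ w n σ s C / L ^ (n + 2) := by
  obtain ⟨hq₁, hqL⟩ := Finset.mem_Icc.1 hq
  have hK₁ : 0 ≤ C * (1 / (1 - σ) + ∑ k, w k * (1 + θ k) ^ (-σ)) :=
    mul_nonneg hC (add_nonneg (by simp; linarith) (sum_mul_one_add_rpow_nonneg hw hθ))
  rcases hq₁.eq_or_lt with rfl | hq₂
  · rw [Nat.cast_one, sub_self]
    refine (abs_integral_sub_scaledRule_gradedMesh_one_le hw hθ hC hσ₁ (by linarith)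
      (by rw [hsn]; norm_cast) (by omega) hgb).trans ?_
    gcongr
    exact le_add_of_nonneg_right (by positivity)
  · refine (abs_integral_sub_scaledRule_gradedMesh_le_of_two_le hexact hw
      (fun k => Ioc_subset_Icc_self (hθ k)) hσ₀ hs hsn hg hgd hq₂ hqL).trans ?_
    gcongr
    exact le_add_of_nonneg_left hK₁

theorem abs_integral_sub_sum_scaledRule_gradedMesh_le
    (hexact : IsExactOfDegree θ w n) (hw : ∀ k, 0 ≤ w k) (hθ : ∀ k, θ k ∈ Ioc (-1) 1)
    (hσ₀ : 0 ≤ σ) (hσ₁ : σ < 1) (hsn : s * (1 - σ) = n + 2) (hC : 0 ≤ C)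
    (hg : ContDiffOn ℝ (n + 1) g (Ioc 0 1)) (hgb : ∀ y ∈ Ioc (0 : ℝ) 1, |g y| ≤ C * y ^ (-σ))
    (hgd : ∀ y ∈ Ioc (0 : ℝ) 1,
      |iteratedDerivWithin (n + 1) g (Ioc 0 1) y| ≤ C * y ^ (-σ - (n + 1)))
    (hL : L ≠ 0) :
    |(∫ y in (0 : ℝ)..1, g y) - ∑ q ∈ Finset.Icc 1 L,
        scaledRule θ w g (gradedMesh s L (q - 1)) (gradedMesh s L q)| ≤
      gradedQuadratureConst θ w n σ s C / L ^ (n + 1) := by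
  have hs : 1 ≤ s := by
    rw [← div_eq_of_eq_mul (by linarith) hsn.symm, le_div_iff₀ (by linarith)]
    linarith
  have hint : IntervalIntegrable g volume 0 1 :=
    intervalIntegrable_of_abs_le_rpow hσ₁ zero_le_one hg.continuousOn hgb
  have hsplit := integral_eq_sum_Icc_integral (gradedMesh s L) L fun q hq => by
    obtain ⟨hq₁, hqL⟩ := Finset.mem_Icc.1 hq
    have hq' : (1 : ℝ) ≤ q ∧ (q : ℝ) ≤ L := ⟨by exact_mod_cast hq₁, by exact_mod_cast hqL⟩
    refine hint.mono_set ?_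
    rw [uIcc_of_le zero_le_one]
    exact uIcc_subset_Icc (gradedMesh_mem_Icc (by linarith) (by linarith) (by linarith))
      (gradedMesh_mem_Icc (by linarith) (by linarith) hq'.2)
  rw [gradedMesh_zero (by linarith), gradedMesh_self hL] at hsplit
  rw [hsplit, ← Finset.sum_sub_distrib]
  calc _ ≤ _ := Finset.abs_sum_le_sum_abs _ _
    _ ≤ ∑ q ∈ Finset.Icc 1 L, gradedQuadratureConst θ w n σ s C / L ^ (n + 2) :=
      Finset.sum_le_sum fun q hq => abs_integral_sub_scaledRule_gradedMesh_le_gradedQuadratureConst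
        hexact hw hθ hσ₀ hσ₁ hs hsn hC hg hgb hgd hq
    _ = gradedQuadratureConst θ w n σ s C / L ^ (n + 1) := by
      rw [Finset.sum_const, Nat.card_Icc, Nat.add_sub_cancel, nsmul_eq_mul]
      field_simp
      ring

end GradedComposite

/-- Composite graded-mesh quadrature for weakly singular integrands: if a rule with nodes
`θ_k ∈ (−1,1)` and positive weights `w_k` is exact on polynomials of degree at most
`2m − 1`, `σ ∈ (0,1)`, and `g` satisfies `|g(y)| ≤ C y^{−σ}` and
`|g^{(2m)}(y)| ≤ C y^{−σ−2m}` on `(0,1]`, then with the graded mesh `h_q = (q/L)^s`,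
`s = (2m+1)/(1−σ)`, the composite rule converges with rate `L^{−2m}`, with a constant
independent of `g` (given `C`) and of `L`. -/
theorem composite_graded_quadrature_error (m : ℕ) (hm : 1 ≤ m)
    (σ : ℝ) (hσ : σ ∈ Set.Ioo (0 : ℝ) 1)
    (θ w : Fin m → ℝ) (hθ : ∀ k, θ k ∈ Set.Ioo (-1 : ℝ) 1) (hw : ∀ k, 0 < w k)
    (hexact : ∀ p : Polynomial ℝ, p.natDegree ≤ 2 * m - 1 →
      ∑ k, w k * p.eval (θ k) = ∫ t in (-1 : ℝ)..1, p.eval t)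
    (C : ℝ) (hC : 0 < C) :
    ∃ C' : ℝ, 0 < C' ∧ ∀ g : ℝ → ℝ,
      ContDiffOn ℝ (2 * m) g (Set.Ioc 0 1) →
      (∀ y ∈ Set.Ioc (0 : ℝ) 1, |g y| ≤ C * y ^ (-σ)) →
      (∀ y ∈ Set.Ioc (0 : ℝ) 1,
        |iteratedDerivWithin (2 * m) g (Set.Ioc 0 1) y| ≤ C * y ^ (-σ - 2 * m)) →
      ∀ L : ℕ, 1 ≤ L →
        |(∫ y in (0 : ℝ)..1, g y) -
            ∑ q ∈ Finset.Icc 1 L, ∑ k,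
              w k * ((((q : ℝ) / L) ^ ((2 * m + 1) / (1 - σ)) -
                  (((q : ℝ) - 1) / L) ^ ((2 * m + 1) / (1 - σ))) / 2) *
                g (((((q : ℝ) / L) ^ ((2 * m + 1) / (1 - σ)) -
                      (((q : ℝ) - 1) / L) ^ ((2 * m + 1) / (1 - σ))) / 2) * θ k +
                    ((((q : ℝ) / L) ^ ((2 * m + 1) / (1 - σ)) +
                      (((q : ℝ) - 1) / L) ^ ((2 * m + 1) / (1 - σ))) / 2))| ≤
          C' * (L : ℝ) ^ (-(2 * (m : ℝ))) := by
  obtain ⟨hσ₀, hσ₁⟩ := hσ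
  set n := 2 * m - 1
  have hn : 2 * m = n + 1 := by omega
  have hn' : 2 * (m : ℝ) = n + 1 := by exact_mod_cast hn
  set s : ℝ := (2 * m + 1) / (1 - σ)
  have hsn : s * (1 - σ) = n + 2 := by simp only [s]; field_simp; linarith
  have hθ' : ∀ k, θ k ∈ Ioc (-1) 1 := fun k => Ioo_subset_Ioc_self (hθ k)
  refine ⟨gradedQuadratureConst θ w n σ s C, ?_, fun g hg hgb hgd L hL => ?_⟩
  · exact gradedQuadratureConst_pos (fun k => (hw k).le) hθ' hσ₁
      (div_nonneg (by positivity) (by linarith)) hC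
  rw [hn', Real.rpow_neg (by positivity), ← Nat.cast_add_one, Real.rpow_natCast, ← div_eq_mul_inv]
  exact abs_integral_sub_sum_scaledRule_gradedMesh_le hexact (fun k => (hw k).le) hθ' hσ₀.le hσ₁
    hsn hC.le (hg.of_le (by norm_cast; omega)) hgb (fun y hy => by rw [← hn, ← hn']; exact hgd y hy)
    (by omega)
end

section
/- For every x ∈ (0, π), the improper Lebesgue integral ∫_0^π ln|cos x − cos t| dt exists and equals −π·ln 2. Consequently, the constant function u(x) = 1/(π ln 2 + 1) is a solution of the weakly singular Fredholm integral equation u(x) − ∫_0^π ln|cos x − cos t|·u(t) dt = 1 for x ∈ (0, π). -/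
/-!
Since `cos x - cos t = -2 sin ((x + t) / 2) sin ((x - t) / 2)`, the kernel splits as
`log 2 + log sin (t/2 + x/2) + log sin (x/2 - t/2)` away from the single `t ∈ [0, π]` with
`cos t = cos x`. After the substitutions `u = t/2 ± x/2` the two `log sin` integrals cover the
adjacent intervals `[x/2 - π/2, x/2]` and `[x/2, x/2 + π/2]`, i.e. one full period of the
`π`-periodic function `log |sin|`, on which the integral is `-π log 2`.
-/

open MeasureTheory Real Set intervalIntegral
open scoped Interval

theorem periodic_log_sin : Function.Periodic (fun t => log (sin t)) π := fun t => by
  simp only [sin_add_pi, log_neg_eq_log]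

theorem integral_log_sin_add_pi (a : ℝ) : ∫ t in a..a + π, log (sin t) = -log 2 * π := by
  rw [periodic_log_sin.intervalIntegral_add_eq a 0, zero_add, integral_log_sin_zero_pi]

theorem intervalIntegrable_log_of_analyticOnNhd {f : ℝ → ℝ} (hf : AnalyticOnNhd ℝ f univ)
    (a b : ℝ) : IntervalIntegrable (fun t => log (f t)) volume a b :=
  (hf.mono (subset_univ _)).meromorphicOn.intervalIntegrable_log

theorem log_abs_cos_sub_cos {x t : ℝ} (h : cos t ≠ cos x) :
    log |cos x - cos t| = log 2 + log (sin (t / 2 + x / 2)) + log (sin (x / 2 - t / 2)) := by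
  have hprod : cos x - cos t = -2 * sin (t / 2 + x / 2) * sin (x / 2 - t / 2) := by
    rw [cos_sub_cos]; ring_nf
  have hne : -2 * sin (t / 2 + x / 2) * sin (x / 2 - t / 2) ≠ 0 :=
    hprod ▸ sub_ne_zero.mpr h.symm
  obtain ⟨hne₁, hne₂⟩ := mul_ne_zero_iff.mp hne
  rw [log_abs, hprod, log_mul hne₁ hne₂, log_mul (by norm_num) (mul_ne_zero_iff.mp hne₁).2,
    log_neg_eq_log]

theorem ae_cos_ne_cos (x : ℝ) : ∀ᵐ t, t ∈ Ι 0 π → cos t ≠ cos x := by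
  rw [ae_iff]
  refine Set.Subsingleton.measure_zero (fun a ha b hb => ?_) volume
  obtain ⟨ha, hca⟩ := Classical.not_imp.mp ha
  obtain ⟨hb, hcb⟩ := Classical.not_imp.mp hb
  rw [uIoc_of_le pi_pos.le] at ha hb
  exact injOn_cos (Ioc_subset_Icc_self ha) (Ioc_subset_Icc_self hb)
    ((not_not.mp hca).trans (not_not.mp hcb).symm)

theorem intervalIntegrable_log_abs_cos_sub_cos (x a b : ℝ) :
    IntervalIntegrable (fun t => log |cos x - cos t|) volume a b := by
  simp only [log_abs]
  exact intervalIntegrable_log_of_analyticOnNhd (fun _ _ => by fun_prop) a b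

theorem integral_log_abs_cos_sub_cos (x : ℝ) :
    ∫ t in (0 : ℝ)..π, log |cos x - cos t| = -π * log 2 := by
  have hint₁ : IntervalIntegrable (fun t => log (sin (t / 2 + x / 2))) volume 0 π :=
    intervalIntegrable_log_of_analyticOnNhd (fun _ _ => by fun_prop) 0 π
  have hint₂ : IntervalIntegrable (fun t => log (sin (x / 2 - t / 2))) volume 0 π :=
    intervalIntegrable_log_of_analyticOnNhd (fun _ _ => by fun_prop) 0 π
  calc ∫ t in (0 : ℝ)..π, log |cos x - cos t|
    _ = ∫ t in (0 : ℝ)..π, (log 2 + log (sin (t / 2 + x / 2)) + log (sin (x / 2 - t / 2))) :=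
      integral_congr_ae <| by
        filter_upwards [ae_cos_ne_cos x] with t ht hmem using log_abs_cos_sub_cos (ht hmem)
    _ = π * log 2 + 2 * ((∫ t in x / 2 - π / 2..x / 2, log (sin t)) +
          ∫ t in x / 2..x / 2 + π / 2, log (sin t)) := by
      rw [integral_add (intervalIntegrable_const.add hint₁) hint₂,
        integral_add intervalIntegrable_const hint₁, intervalIntegral.integral_const,
        integral_comp_div_add (fun t => log (sin t)) two_ne_zero,
        integral_comp_sub_div (fun t => log (sin t)) two_ne_zero]
      simp only [zero_div, zero_add, sub_zero, smul_eq_mul]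
      rw [add_comm (π / 2)]
      ring
    _ = π * log 2 + 2 * ∫ t in x / 2 - π / 2..x / 2 - π / 2 + π, log (sin t) := by
      rw [show x / 2 - π / 2 + π = x / 2 + π / 2 by ring, integral_add_adjacent_intervals
        (intervalIntegrable_log_of_analyticOnNhd analyticOnNhd_sin _ _)
        (intervalIntegrable_log_of_analyticOnNhd analyticOnNhd_sin _ _)]
    _ = -π * log 2 := by
      rw [integral_log_sin_add_pi]
      ring

theorem log_cos_kernel_integral_general (x : ℝ) :
    IntegrableOn (fun t => Real.log |Real.cos x - Real.cos t|) (Set.Ioc 0 π) volume ∧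
    (∫ t in (0 : ℝ)..π, Real.log |Real.cos x - Real.cos t|) = -π * Real.log 2 ∧
    (fun _ : ℝ => 1 / (π * Real.log 2 + 1)) x -
        (∫ t in (0 : ℝ)..π, Real.log |Real.cos x - Real.cos t| *
          (fun _ : ℝ => 1 / (π * Real.log 2 + 1)) t) = 1 := by
  have hval := integral_log_abs_cos_sub_cos x
  refine ⟨(intervalIntegrable_iff_integrableOn_Ioc_of_le pi_pos.le).mp
    (intervalIntegrable_log_abs_cos_sub_cos x 0 π), hval, ?_⟩
  beta_reduce
  rw [intervalIntegral.integral_mul_const, hval]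
  have hden : 0 < π * log 2 + 1 := by positivity
  field_simp
  ring

/-- For every `x ∈ (0, π)`, `∫_0^π ln|cos x − cos t| dt = −π ln 2`; consequently the
constant function `u ≡ 1/(π ln 2 + 1)` solves the weakly singular Fredholm integral
equation `u(x) − ∫_0^π ln|cos x − cos t| u(t) dt = 1` on `(0, π)`. -/
theorem log_cos_kernel_integral (x : ℝ) (hx : x ∈ Set.Ioo 0 π) :
    IntegrableOn (fun t => Real.log |Real.cos x - Real.cos t|) (Set.Ioc 0 π) volume ∧
    (∫ t in (0 : ℝ)..π, Real.log |Real.cos x - Real.cos t|) = -π * Real.log 2 ∧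
    (fun _ : ℝ => 1 / (π * Real.log 2 + 1)) x -
        (∫ t in (0 : ℝ)..π, Real.log |Real.cos x - Real.cos t| *
          (fun _ : ℝ => 1 / (π * Real.log 2 + 1)) t) = 1 :=
  log_cos_kernel_integral_general x
end

section
/- For every x ∈ (0, 1), the improper Lebesgue integral ∫_0^1 ln|x − t|·(3t² − 1) dt exists and equals −(x³ − x)·ln((1 − x)/x) − x² − x/2 + 2/3. Consequently, the function u(x) = 3x² − 1 is a solution of the weakly singular Fredholm integral equation u(x) − ∫_0^1 ln|x − t|·u(t) dt = f(x) on (0,1) with right-hand side f(x) = (x³ − x)·ln((1 − x)/x) + 4x² + x/2 − 5/3. -/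
/-!
With `P t = t ^ 3 - t` and `R` defined by `P t - P x = (t - x) * R t`, integrating
`log |x - t| * P' t` by parts gives the primitive `(t - x) * log |t - x| * R t - Q t` with `Q' = R`.
It is continuous across `t = x` because `s * log s → 0`, so the fundamental theorem of calculus
with the single exceptional point `x` evaluates the integral. As `Real.log` is even, no sign
distinction on `t - x` is needed and the computation works for every real `x`.
-/

open MeasureTheory Real Set

theorem intervalIntegrable_log_abs_sub_mul {g : ℝ → ℝ} {a b : ℝ}
    (hg : ContinuousOn g (uIcc a b)) (x : ℝ) :
    IntervalIntegrable (fun t => log |x - t| * g t) volume a b := by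
  have hlog := (intervalIntegral.intervalIntegrable_log' (a := x - a) (b := x - b)).comp_sub_left x
  simp only [sub_sub_cancel, log_abs] at hlog ⊢
  exact hlog.mul_continuousOn hg

theorem integral_log_abs_sub_mul_deriv {R r Q : ℝ → ℝ} (hR : ∀ t, HasDerivAt R (r t) t)
    (hr : Continuous r) (hQ : ∀ t, HasDerivAt Q (R t) t) (x a b : ℝ) :
    ∫ t in a..b, log |x - t| * (R t + (t - x) * r t) =
      ((b - x) * log (b - x) * R b - Q b) - ((a - x) * log (a - x) * R a - Q a) := by
  have hRc : Continuous R := continuous_iff_continuousAt.2 fun t => (hR t).continuousAt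
  have hQc : Continuous Q := continuous_iff_continuousAt.2 fun t => (hQ t).continuousAt
  refine integral_eq_of_hasDerivAt_off_countable _ _ (countable_singleton x)
    ((((continuous_sub_right x).mul_log).mul hRc).sub hQc).continuousOn
    (fun t ⟨_, ht⟩ => ?_)
    (intervalIntegrable_log_abs_sub_mul (by fun_prop) x)
  have hlin : HasDerivAt (fun s => s - x) 1 t := (hasDerivAt_id t).sub_const x
  refine ((((hasDerivAt_mul_log (sub_ne_zero.2 ht)).comp t hlin).mul (hR t)).sub
    (hQ t)).congr_deriv ?_
  rw [abs_sub_comm, log_abs]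
  simp only [Function.comp_apply]
  ring

/-- The factor `x ^ 3 - x` vanishes exactly where `log_div` would fail. -/
theorem mul_log_one_sub_div_self (x : ℝ) :
    (x ^ 3 - x) * log ((1 - x) / x) = (x ^ 3 - x) * (log (1 - x) - log x) := by
  rcases eq_or_ne x 0 with rfl | hx0
  · simp
  rcases eq_or_ne x 1 with rfl | hx1
  · simp
  rw [log_div (sub_ne_zero.2 hx1.symm) hx0]

theorem log_kernel_integral_legendre_general (x : ℝ) :
    IntegrableOn (fun t => Real.log |x - t| * (3 * t ^ 2 - 1)) (Set.Ioc 0 1) volume ∧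
    (∫ t in (0 : ℝ)..1, Real.log |x - t| * (3 * t ^ 2 - 1)) =
      -(x ^ 3 - x) * Real.log ((1 - x) / x) - x ^ 2 - x / 2 + 2 / 3 ∧
    (fun y : ℝ => 3 * y ^ 2 - 1) x -
        (∫ t in (0 : ℝ)..1, Real.log |x - t| * (fun y : ℝ => 3 * y ^ 2 - 1) t) =
      (x ^ 3 - x) * Real.log ((1 - x) / x) + 4 * x ^ 2 + x / 2 - 5 / 3 := by
  have hint : IntervalIntegrable (fun t => log |x - t| * (3 * t ^ 2 - 1)) volume 0 1 :=
    intervalIntegrable_log_abs_sub_mul (by fun_prop) x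
  have hR (t : ℝ) : HasDerivAt (fun s => s ^ 2 + s * x + (x ^ 2 - 1)) (2 * t + x) t :=
    (((hasDerivAt_pow 2 t).add ((hasDerivAt_id' t).mul_const x)).add_const _).congr_deriv
      (by norm_num)
  have hQ (t : ℝ) : HasDerivAt (fun s => s ^ 3 / 3 + x * s ^ 2 / 2 + (x ^ 2 - 1) * s)
      (t ^ 2 + t * x + (x ^ 2 - 1)) t :=
    ((((hasDerivAt_pow 3 t).div_const 3).add (((hasDerivAt_pow 2 t).const_mul x).div_const 2)).add
      ((hasDerivAt_id' t).const_mul _)).congr_deriv (by norm_num; ring)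
  have hval : ∫ t in (0 : ℝ)..1, log |x - t| * (3 * t ^ 2 - 1) =
      -(x ^ 3 - x) * log ((1 - x) / x) - x ^ 2 - x / 2 + 2 / 3 := by
    calc ∫ t in (0 : ℝ)..1, log |x - t| * (3 * t ^ 2 - 1)
        = ∫ t in (0 : ℝ)..1,
            log |x - t| * ((t ^ 2 + t * x + (x ^ 2 - 1)) + (t - x) * (2 * t + x)) := by
          congr 1; ext t; ring
      _ = _ := integral_log_abs_sub_mul_deriv hR (by fun_prop) hQ x 0 1
      _ = _ := by
          rw [zero_sub, log_neg_eq_log, neg_mul (x ^ 3 - x), mul_log_one_sub_div_self]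
          ring
  refine ⟨(intervalIntegrable_iff_integrableOn_Ioc_of_le zero_le_one).mp hint, hval, ?_⟩
  rw [hval]
  ring

/-- For every `x ∈ (0, 1)`, `∫_0^1 ln|x − t|(3t² − 1) dt` exists and equals
`−(x³ − x) ln((1 − x)/x) − x² − x/2 + 2/3`; consequently `u(x) = 3x² − 1` solves the
weakly singular Fredholm integral equation `u(x) − ∫_0^1 ln|x − t| u(t) dt = f(x)` with
`f(x) = (x³ − x) ln((1 − x)/x) + 4x² + x/2 − 5/3`. -/
theorem log_kernel_integral_legendre (x : ℝ) (hx : x ∈ Set.Ioo (0 : ℝ) 1) :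
    IntegrableOn (fun t => Real.log |x - t| * (3 * t ^ 2 - 1)) (Set.Ioc 0 1) volume ∧
    (∫ t in (0 : ℝ)..1, Real.log |x - t| * (3 * t ^ 2 - 1)) =
      -(x ^ 3 - x) * Real.log ((1 - x) / x) - x ^ 2 - x / 2 + 2 / 3 ∧
    (fun y : ℝ => 3 * y ^ 2 - 1) x -
        (∫ t in (0 : ℝ)..1, Real.log |x - t| * (fun y : ℝ => 3 * y ^ 2 - 1) t) =
      (x ^ 3 - x) * Real.log ((1 - x) / x) + 4 * x ^ 2 + x / 2 - 5 / 3 :=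
  log_kernel_integral_legendre_general x
end
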